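/- arXiv:2302.04121 — 8 statements merged into one kernel-verified Lean document; each statement's English description precedes it below -/
import Mathlib

section
/- Let g ≥ 1 and let x_1, …, x_g be pairwise distinct complex numbers. Then for all integers j and n with 1 ≤ j ≤ g and 0 ≤ n ≤ g, one has ∑_{i=1}^g x_i^{g−j} · χ_n(x_i; x_1, …, x_g) / F'(x_i) = 1 if n = j−1, and = 0 otherwise. -/
open Finset Polynomial

/-- `χ_m(t; x_1, …, x_g) = ∑_{j=0}^m (-1)^j h_j(x_1,…,x_g) t^{m-j}`, where `h_j`
is the `j`-th elementary symmetric polynomial of the multiset of the `x_i`. -/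
noncomputable def chi (m : ℕ) (t : ℂ) (s : Multiset ℂ) : ℂ :=
  ∑ j ∈ Finset.range (m + 1), (-1) ^ j * s.esymm j * t ^ (m - j)

lemma Skey {g : ℕ} (x : Fin g → ℂ) (hx : Function.Injective x) {k : ℕ} (hk : k < g) :
    ∑ i, (x i) ^ k / (∏ l ∈ univ.erase i, (x i - x l)) =
      if k = g - 1 then 1 else 0 := by
  have hvs : Set.InjOn x (univ : Finset (Fin g)) := hx.injOn
  have hcard : #(univ : Finset (Fin g)) = g := by simp
  have hdeg : (X ^ k : ℂ[X]).degree < (#(univ : Finset (Fin g)) : ℕ) := by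
    rw [degree_X_pow, hcard]; exact_mod_cast hk
  have h := Lagrange.eq_interpolate (v := x) hvs hdeg
  have hc := congrArg (fun p : ℂ[X] => p.coeff (g - 1)) h
  simp only [Lagrange.interpolate_apply, finset_sum_coeff, coeff_C_mul, eval_pow, eval_X,
    coeff_X_pow] at hc
  have hb : ∀ i : Fin g, (Lagrange.basis univ x i).coeff (g - 1)
      = (∏ l ∈ univ.erase i, (x i - x l))⁻¹ := by
    intro i
    have hnd : (Lagrange.basis univ x i).natDegree = g - 1 := by
      rw [Lagrange.natDegree_basis hvs (mem_univ i), hcard]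
    rw [← hnd, ← leadingCoeff]
    unfold Lagrange.basis Lagrange.basisDivisor
    rw [leadingCoeff_prod, ← prod_inv_distrib]
    refine prod_congr rfl fun l hl => ?_
    rw [leadingCoeff_mul, leadingCoeff_C, leadingCoeff_X_sub_C, mul_one]
  simp only [hb] at hc
  simp_rw [div_eq_mul_inv]
  rw [← hc]
  by_cases h' : k = g - 1 <;> simp [h', eq_comm]

/-- For pairwise distinct `x_1, …, x_g`, `1 ≤ j ≤ g` and `0 ≤ n ≤ g`,
`∑_{i=1}^g x_i^{g−j} χ_n(x_i; x_1,…,x_g) / F'(x_i) = δ_{n, j−1}`. -/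
theorem sum_pow_chi_div_Fderiv
    (g : ℕ) (hg : 1 ≤ g) (x : Fin g → ℂ) (hx : Function.Injective x)
    (j : ℕ) (hj1 : 1 ≤ j) (hjg : j ≤ g) (n : ℕ) (hn : n ≤ g) :
    ∑ i, (x i) ^ (g - j) * chi n (x i) (Multiset.map x univ.val)
          / (∏ l ∈ univ.erase i, (x i - x l)) =
      if n = j - 1 then 1 else 0 := by
  classical
  set s : Multiset ℂ := Multiset.map x univ.val with hs
  have hcs : Multiset.card s = g := by simp [hs]
  by_cases hcase : n < j
  · -- low-degree case
    have key : ∀ i : Fin g, (x i) ^ (g - j) * chi n (x i) s =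
        ∑ m ∈ Finset.range (n+1), (-1)^m * s.esymm m * (x i)^((g-j)+(n-m)) := by
      intro i
      rw [chi, Finset.mul_sum]
      exact Finset.sum_congr rfl fun m hm => by rw [pow_add]; ring
    simp_rw [key, Finset.sum_div]
    rw [Finset.sum_comm]
    simp_rw [mul_div_assoc, ← Finset.mul_sum]
    have hSk : ∀ m ∈ Finset.range (n+1),
        (-1:ℂ)^m * s.esymm m * ∑ i, (x i)^((g-j)+(n-m)) / (∏ l ∈ univ.erase i, (x i - x l))
        = (-1:ℂ)^m * s.esymm m * (if (g-j)+(n-m) = g - 1 then 1 else 0) := by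
      intro m hm
      rw [Skey x hx (by omega)]
    rw [Finset.sum_congr rfl hSk]
    by_cases hnj : n = j - 1
    · rw [if_pos hnj]
      rw [Finset.sum_eq_single_of_mem 0 (by simp)]
      · rw [if_pos (by omega), pow_zero]
        simp [Multiset.esymm]
      · intro m hm hm0
        simp only [Finset.mem_range] at hm
        rw [if_neg (by omega), mul_zero]
    · rw [if_neg hnj]
      refine Finset.sum_eq_zero fun m hm => ?_
      simp only [Finset.mem_range] at hm
      rw [if_neg (by omega), mul_zero]
  · -- high-degree case: use F(x i) = 0
    push_neg at hcase
    have hF : ∀ i : Fin g,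
        ∑ k ∈ Finset.range (g+1), (-1:ℂ)^k * s.esymm k * (x i)^((g-k)+(n-j)) = 0 := by
      intro i
      have h0 : ((s.map fun t => X - C t).prod).eval (x i) = 0 := by
        rw [eval_multiset_prod]
        refine Multiset.prod_eq_zero ?_
        rw [Multiset.map_map]
        refine Multiset.mem_map.mpr ⟨x i, ?_, by simp⟩
        simp only [hs, Multiset.mem_map]
        exact ⟨i, Finset.mem_univ_val i, rfl⟩
      rw [Multiset.prod_X_sub_X_eq_sum_esymm, hcs] at h0
      have h1 : (x i)^(n-j) * ∑ k ∈ Finset.range (g+1), (-1:ℂ)^k * s.esymm k * (x i)^(g-k) = 0 := by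
        rw [show (∑ k ∈ Finset.range (g+1), (-1:ℂ)^k * s.esymm k * (x i)^(g-k)) = 0 from ?_, mul_zero]
        rw [← h0, eval_finset_sum]
        refine Finset.sum_congr rfl fun k hk => ?_
        simp [mul_assoc]
      rw [Finset.mul_sum] at h1
      rw [← h1]
      refine Finset.sum_congr rfl fun k hk => ?_
      rw [pow_add]; ring
    have key : ∀ i : Fin g, (x i) ^ (g - j) * chi n (x i) s =
        -∑ k ∈ Finset.Ico (n+1) (g+1), (-1:ℂ)^k * s.esymm k * (x i)^((g-k)+(n-j)) := by
      intro i
      have hsplit := hF i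
      rw [Finset.range_eq_Ico, ← Finset.sum_Ico_consecutive _ (by omega : 0 ≤ n+1) (by omega : n+1 ≤ g+1)] at hsplit
      have h2 : ∑ k ∈ Finset.Ico 0 (n+1), (-1:ℂ)^k * s.esymm k * (x i)^((g-k)+(n-j))
          = (x i) ^ (g - j) * chi n (x i) s := by
        rw [chi, Finset.mul_sum, ← Finset.range_eq_Ico]
        refine Finset.sum_congr rfl fun m hm => ?_
        simp only [Finset.mem_range] at hm
        rw [show (g-m)+(n-j) = (g-j)+(n-m) by omega, pow_add]
        ring
      rw [h2] at hsplit
      linear_combination hsplit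
    simp_rw [key]
    rw [if_neg (by omega)]
    simp_rw [neg_div, Finset.sum_div, Finset.sum_neg_distrib, neg_eq_zero]
    rw [Finset.sum_comm]
    simp_rw [mul_div_assoc, ← Finset.mul_sum]
    refine Finset.sum_eq_zero fun k hk => ?_
    simp only [Finset.mem_Ico] at hk
    rw [Skey x hx (by omega), if_neg (by omega), mul_zero]
end

section
/- Let g ≥ 1 and let x_1, …, x_g be pairwise distinct complex numbers. Then for every integer n with 0 ≤ n ≤ g−1, one has ∑_{i=1}^g x_i^{g} · χ_n(x_i; x_1, …, x_g) / F'(x_i) = (−1)^n h_{n+1}(x_1, …, x_g). -/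
/-!
Write `F(t) = ∏ (t - x_l) = ∑_{j ≤ g} (-1)^j h_j t^{g-j}`. Then
`t^g χ_n(t) = t^n F(t) - R_n(t)` with `R_n = ∑_{j > n} (-1)^j h_j t^{g+n-j}`, a polynomial of
degree `< g`. As `F` vanishes at the nodes, the sum equals `-∑_i R_n(x_i) / F'(x_i)`, which by
Lagrange interpolation is minus the coefficient of `t^{g-1}` in `R_n`, i.e. `(-1)^n h_{n+1}`.
-/

open Finset

open Polynomial

namespace Multiset

theorem esymm_eq_zero_of_card_lt {R : Type*} [CommSemiring R] {s : Multiset R} {n : ℕ}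
    (h : card s < n) : s.esymm n = 0 := by
  simp [esymm, powersetCard_eq_empty _ h]

variable {R : Type*} [CommRing R]

theorem sum_esymm_mul_pow_eq_zero_of_mem {s : Multiset R} {t : R} (ht : t ∈ s) :
    ∑ j ∈ Finset.range (card s + 1), (-1) ^ j * s.esymm j * t ^ (card s - j) = 0 := by
  have := congrArg (eval t) (prod_X_sub_X_eq_sum_esymm s)
  simp only [eval_multiset_prod, map_map, Function.comp_def, eval_sub, eval_X, eval_C,
    eval_finsetSum, eval_mul, eval_pow, eval_neg, eval_one] at this
  rw [prod_eq_zero (mem_map.2 ⟨t, ht, sub_self t⟩)] at this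
  simpa only [mul_assoc] using this.symm

noncomputable def esymmTail (n : ℕ) (s : Multiset R) : R[X] :=
  ∑ j ∈ Finset.Ico (n + 1) (card s + 1), C ((-1) ^ j * s.esymm j) * X ^ (card s + n - j)

theorem degree_esymmTail_lt (n : ℕ) (s : Multiset R) : (esymmTail n s).degree < card s := by
  refine (degree_sum_le _ _).trans_lt <| (Finset.sup_lt_iff (WithBot.bot_lt_coe _)).2 ?_
  intro j hj
  have : card s + n - j < card s := by grind
  exact (degree_C_mul_X_pow_le _ _).trans_lt (by exact_mod_cast this)

theorem coeff_esymmTail (n : ℕ) (s : Multiset R) :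
    (esymmTail n s).coeff (card s - 1) = (-1) ^ (n + 1) * s.esymm (n + 1) := by
  simp only [esymmTail, finsetSum_coeff, coeff_C_mul_X_pow]
  rw [Finset.sum_eq_single (n + 1)]
  · grind
  · grind
  · intro h
    rw [esymm_eq_zero_of_card_lt (by grind), mul_zero, ite_self]

end Multiset

open Multiset in
theorem pow_card_mul_chi_add_eval_esymmTail (n : ℕ) (s : Multiset ℂ) (t : ℂ) :
    t ^ card s * chi n t s + (esymmTail n s).eval t =
      t ^ n * ∑ j ∈ range (card s + 1), (-1) ^ j * s.esymm j * t ^ (card s - j) := by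
  set f : ℕ → ℂ := fun j ↦ (-1) ^ j * s.esymm j * t ^ (card s + n - j)
  have hchi : t ^ card s * chi n t s = ∑ j ∈ range (n + 1), f j := by
    rw [chi, mul_sum]
    refine sum_congr rfl fun j hj ↦ ?_
    dsimp only [f]
    rw [show card s + n - j = card s + (n - j) by grind, pow_add]
    ring
  have htail : (esymmTail n s).eval t = ∑ j ∈ Ico (n + 1) (card s + 1), f j := by
    simp [esymmTail, eval_finsetSum, f]
  have hprod : t ^ n * ∑ j ∈ range (card s + 1), (-1) ^ j * s.esymm j * t ^ (card s - j) =
      ∑ j ∈ range (card s + 1), f j := by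
    rw [mul_sum]
    refine sum_congr rfl fun j hj ↦ ?_
    dsimp only [f]
    rw [show card s + n - j = n + (card s - j) by grind, pow_add]
    ring
  rw [hchi, htail, hprod]
  rcases le_or_gt n (card s) with h | h
  · exact sum_range_add_sum_Ico f (by omega)
  · rw [Ico_eq_empty_of_le (by omega), sum_empty, add_zero]
    refine (sum_subset (range_subset_range.2 (by omega)) fun j _ hj ↦ ?_).symm
    simp [f, esymm_eq_zero_of_card_lt (by simpa using hj)]

theorem pow_card_mul_chi_eq_neg_eval_esymmTail (n : ℕ) {s : Multiset ℂ} {t : ℂ} (ht : t ∈ s) :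
    t ^ Multiset.card s * chi n t s = -(s.esymmTail n).eval t := by
  have h := pow_card_mul_chi_add_eval_esymmTail n s t
  rw [Multiset.sum_esymm_mul_pow_eq_zero_of_mem ht, mul_zero] at h
  exact eq_neg_of_add_eq_zero_left h

theorem sum_powg_chi_div_Fderiv_general
    (g : ℕ) (x : Fin g → ℂ) (hx : Function.Injective x)
    (n : ℕ) :
    ∑ i, (x i) ^ g * chi n (x i) (Multiset.map x univ.val)
          / (∏ l ∈ univ.erase i, (x i - x l)) =
      (-1) ^ n * (Multiset.map x univ.val).esymm (n + 1) := by
  set s := Multiset.map x univ.val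
  have hcard : Multiset.card s = g := by simp [s]
  have hnode (i : Fin g) : x i ^ g * chi n (x i) s = -(s.esymmTail n).eval (x i) :=
    hcard ▸ pow_card_mul_chi_eq_neg_eval_esymmTail n (Multiset.mem_map_of_mem x (mem_univ i))
  have hlagrange := Lagrange.coeff_eq_sum (s := univ) hx.injOn
    (by simpa [hcard] using s.degree_esymmTail_lt n)
  rw [card_univ, Fintype.card_fin] at hlagrange
  calc ∑ i, x i ^ g * chi n (x i) s / ∏ l ∈ univ.erase i, (x i - x l)
      = -∑ i, (s.esymmTail n).eval (x i) / ∏ l ∈ univ.erase i, (x i - x l) := by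
        rw [← sum_neg_distrib]
        exact sum_congr rfl fun i _ ↦ by rw [hnode, neg_div]
    _ = (-1) ^ n * s.esymm (n + 1) := by
        rw [← hlagrange, ← hcard, Multiset.coeff_esymmTail]
        ring

/-- For pairwise distinct `x_1, …, x_g` and `0 ≤ n ≤ g−1`,
`∑_{i=1}^g x_i^g χ_n(x_i; x_1,…,x_g) / F'(x_i) = (−1)^n h_{n+1}(x_1,…,x_g)`. -/
theorem sum_powg_chi_div_Fderiv
    (g : ℕ) (hg : 1 ≤ g) (x : Fin g → ℂ) (hx : Function.Injective x)
    (n : ℕ) (hn : n ≤ g - 1) :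
    ∑ i, (x i) ^ g * chi n (x i) (Multiset.map x univ.val)
          / (∏ l ∈ univ.erase i, (x i - x l)) =
      (-1) ^ n * (Multiset.map x univ.val).esymm (n + 1) :=
  sum_powg_chi_div_Fderiv_general g x hx n
end

section
/- Let g ≥ 0 and let λ_0, λ_1, …, λ_{2g+1} be complex numbers. Then for all complex x and z one has the polynomial identity f_1(x, z) = 2 f(z) + f'(z)(x − z) + (x − z)^2 · ∑_{i=1}^g x^{i−1} ∑_{k=i}^{2g+1−i} (k+1−i) λ_{k+1+i} z^k, where f' denotes the derivative of f. -/
open Finset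

/-!
Both sides are linear in `λ`, so it suffices to take `λ = eₙ`. Then `f₁` contributes the
symmetric monomial `sₙ = x^⌊n/2⌋ z^⌈n/2⌉ + x^⌈n/2⌉ z^⌊n/2⌋`, and after exchanging the double
sum the identity becomes `sₙ = 2zⁿ + n zⁿ⁻¹ (x - z) + (x - z)² Qₙ` with
`Qₙ = ∑_{1 ≤ i < n/2} (n - 2i) xⁱ⁻¹ zⁿ⁻¹⁻ⁱ`. Since `sₙ₊₂ = xz sₙ` and `Qₙ₊₂ = xz Qₙ + n zⁿ`,
this follows by induction on `n` in steps of two.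
-/

section SymmetricMonomial

variable {R : Type*} [CommRing R] (x z : R)

def symmetricMonomial (n : ℕ) : R :=
  x ^ (n / 2) * z ^ ((n + 1) / 2) + x ^ ((n + 1) / 2) * z ^ (n / 2)

def symmetricMonomialQuotient (n : ℕ) : R :=
  ∑ i ∈ Ico 1 ((n + 1) / 2), ((n - 2 * i : ℕ) : R) * x ^ (i - 1) * z ^ (n - 1 - i)

lemma symmetricMonomial_add_two (n : ℕ) :
    symmetricMonomial x z (n + 2) = x * z * symmetricMonomial x z n := by
  simp only [symmetricMonomial, show (n + 2 + 1) / 2 = (n + 1) / 2 + 1 by omega,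
    show (n + 2) / 2 = n / 2 + 1 by omega]
  ring

lemma symmetricMonomialQuotient_add_two (n : ℕ) :
    symmetricMonomialQuotient x z (n + 2) =
      x * z * symmetricMonomialQuotient x z n + n * z ^ n := by
  rcases n with _ | n
  · simp [symmetricMonomialQuotient]
  simp only [symmetricMonomialQuotient, sum_Ico_eq_sum_range, mul_sum]
  rw [show (n + 1 + 2 + 1) / 2 - 1 = (n + 1 + 1) / 2 - 1 + 1 by omega, sum_range_succ']
  congr 1
  · refine sum_congr rfl fun j hj => ?_
    have hj := mem_range.mp hj
    rw [show n + 1 + 2 - 2 * (1 + (j + 1)) = n + 1 - 2 * (1 + j) by omega,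
      show n + 1 + 2 - 1 - (1 + (j + 1)) = n + 1 - 1 - (1 + j) + 1 by omega,
      show 1 + (j + 1) - 1 = 1 + j - 1 + 1 by omega]
    ring
  · simp only [Nat.add_sub_cancel_left, pow_zero, mul_one, show n + 1 + 2 - 2 = n + 1 by omega,
      show n + 1 + 2 - 1 - 1 = n + 1 by omega]

lemma symmetricMonomial_eq (n : ℕ) :
    symmetricMonomial x z n =
      2 * z ^ n + n * z ^ (n - 1) * (x - z) + (x - z) ^ 2 * symmetricMonomialQuotient x z n := by
  induction n using Nat.twoStepInduction with
  | zero => simp [symmetricMonomial, symmetricMonomialQuotient, one_add_one_eq_two]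
  | one =>
    rw [symmetricMonomial, symmetricMonomialQuotient, Ico_self, sum_empty]
    norm_num
    ring
  | more n ih _ =>
    rw [symmetricMonomial_add_two, symmetricMonomialQuotient_add_two, ih]
    rcases n with _ | n
    · norm_num
      ring
    · rw [show n + 1 + 2 - 1 = n + 2 by omega, Nat.add_sub_cancel]
      push_cast
      ring

end SymmetricMonomial

lemma sum_range_two_mul {M : Type*} [AddCommMonoid M] (F : ℕ → M) (m : ℕ) :
    ∑ n ∈ range (2 * m), F n = ∑ i ∈ range m, (F (2 * i) + F (2 * i + 1)) := by
  induction m with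
  | zero => simp
  | succ m ih => rw [mul_add_one, sum_range_succ, sum_range_succ, sum_range_succ, ih, add_assoc]

lemma sum_range_eq_sum_symmetricMonomial {R : Type*} [CommRing R] (g : ℕ) (l : ℕ → R) (x z : R) :
    ∑ i ∈ range (g + 1), x ^ i * z ^ i * (2 * l (2 * i) + l (2 * i + 1) * (x + z)) =
      ∑ n ∈ range (2 * g + 2), l n * symmetricMonomial x z n := by
  rw [show 2 * g + 2 = 2 * (g + 1) by ring, sum_range_two_mul]
  refine sum_congr rfl fun i _ => ?_
  simp only [symmetricMonomial, show 2 * i / 2 = i by omega, show (2 * i + 1) / 2 = i by omega,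
    show (2 * i + 1 + 1) / 2 = i + 1 by omega]
  ring

lemma sum_Icc_mul_sum_Icc_eq_sum_symmetricMonomialQuotient {R : Type*} [CommRing R]
    (g : ℕ) (l : ℕ → R) (x z : R) :
    ∑ i ∈ Icc 1 g, x ^ (i - 1) *
        ∑ k ∈ Icc i (2 * g + 1 - i), ((k + 1 - i : ℕ) : R) * l (k + 1 + i) * z ^ k =
      ∑ n ∈ range (2 * g + 3), l n * symmetricMonomialQuotient x z n := by
  have inner (i : ℕ) (hi : i ∈ Icc 1 g) :
      x ^ (i - 1) * ∑ k ∈ Icc i (2 * g + 1 - i), ((k + 1 - i : ℕ) : R) * l (k + 1 + i) * z ^ k =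
        ∑ n ∈ Icc (2 * i + 1) (2 * g + 2),
          l n * (((n - 2 * i : ℕ) : R) * x ^ (i - 1) * z ^ (n - 1 - i)) := by
    have hi := (mem_Icc.mp hi).2
    rw [show Icc (2 * i + 1) (2 * g + 2) = (Icc i (2 * g + 1 - i)).map (addRightEmbedding (i + 1))
      by rw [map_add_right_Icc]; congr 1 <;> omega, sum_map, mul_sum]
    refine sum_congr rfl fun k hk => ?_
    have hk := mem_Icc.mp hk
    rw [addRightEmbedding_apply, show k + (i + 1) = k + 1 + i by omega,
      show k + 1 + i - 2 * i = k + 1 - i by omega, show k + 1 + i - 1 - i = k by omega]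
    ring
  rw [sum_congr rfl inner, sum_comm' (t' := range (2 * g + 3)) (s' := fun n => Ico 1 ((n + 1) / 2))]
  · simp only [symmetricMonomialQuotient, mul_sum]
  · intro i n
    simp only [mem_Icc, mem_Ico, mem_range]
    omega

lemma deriv_sum_mul_pow {𝕜 : Type*} [NontriviallyNormedField 𝕜] (s : Finset ℕ) (c : ℕ → 𝕜)
    (z : 𝕜) :
    deriv (fun w : 𝕜 => ∑ k ∈ s, c k * w ^ k) z = ∑ k ∈ s, c k * (k * z ^ (k - 1)) :=
  (HasDerivAt.fun_sum fun k _ => (hasDerivAt_pow k z).const_mul (c k)).deriv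

/-- The inner sum formally reaches the index `2g+2`, where `l` vanishes. -/
theorem f1_decomposition
    (g : ℕ) (l : ℕ → ℂ) (hl : ∀ k, 2 * g + 1 < k → l k = 0) (x z : ℂ) :
    (∑ i ∈ Finset.range (g + 1), x ^ i * z ^ i * (2 * l (2 * i) + l (2 * i + 1) * (x + z))) =
      2 * (∑ k ∈ Finset.range (2 * g + 2), l k * z ^ k)
        + deriv (fun w : ℂ => ∑ k ∈ Finset.range (2 * g + 2), l k * w ^ k) z * (x - z)
        + (x - z) ^ 2 *
            ∑ i ∈ Finset.Icc 1 g, x ^ (i - 1) *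
              ∑ k ∈ Finset.Icc i (2 * g + 1 - i), ((k + 1 - i : ℕ) : ℂ) * l (k + 1 + i) * z ^ k := by
  rw [sum_range_eq_sum_symmetricMonomial, deriv_sum_mul_pow,
    sum_Icc_mul_sum_Icc_eq_sum_symmetricMonomialQuotient, sum_range_succ _ (2 * g + 2),
    hl (2 * g + 2) (by omega), zero_mul, add_zero, mul_sum, sum_mul, mul_sum,
    ← sum_add_distrib, ← sum_add_distrib]
  refine sum_congr rfl fun n _ => ?_
  rw [symmetricMonomial_eq]
  ring
end

section
/- Let g ≥ 2, let x, x_1, …, x_g be pairwise distinct complex numbers, let y, y_1, …, y_g be arbitrary complex numbers, and let 1 ≤ m ≤ g−1. Then ∑_{j=1}^g [χ_m(x_j; x_1,…,x_g) / F'(x_j)] · (y − y_j)/(x − x_j) = y · χ_m(x; x_1,…,x_g)/F(x) + ∑_{k=1}^g y_k · χ_m(x_k; x_1,…,x_{k−1}, x, x_{k+1},…,x_g) / ((x_k − x) F'(x_k)) − ∑_{k=1}^g y_k · χ_{m−1}(x_k; x_1,…,x_{k−1}, x_{k+1},…,x_g) / F'(x_k), where in the middle sum the k-th list variable x_k is replaced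 by x (so the elementary symmetric polynomials are taken in g variables), and in the last sum the elementary symmetric polynomials are taken in the g−1 variables with x_k omitted. -/
/-!
Split `(y − y_j)/(x − x_j)` into its `y`- and `y_j`-parts. The `y`-part of the left side is the
partial fraction expansion of `χ_m(x)/F(x)`, valid because `deg χ_m = m < g`. For the `y_k`-part,
`e_{j+1}(a, s) = e_{j+1}(s) + a e_j(s)` gives `χ_m(t; a, s) = χ_m(t; s) − a χ_{m−1}(t; s)`, so
replacing `x_k` by `x` in the node list adds `(x_k − x) χ_{m−1}(x_k; x̌_k)` to `χ_m(x_k; ·)`, and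
that term cancels the last sum summand by summand.
-/

open Finset

open Polynomial

theorem Multiset.esymm_zero {R : Type*} [CommSemiring R] (s : Multiset R) : s.esymm 0 = 1 := by
  simp [Multiset.esymm]

theorem Multiset.esymm_cons_succ {R : Type*} [CommSemiring R] (a : R) (s : Multiset R) (k : ℕ) :
    (a ::ₘ s).esymm (k + 1) = s.esymm (k + 1) + a * s.esymm k := by
  simp only [Multiset.esymm, Multiset.powersetCard_cons, Multiset.map_add, Multiset.sum_add,
    Multiset.map_map, Function.comp_def, Multiset.prod_cons, Multiset.sum_map_mul_left]

theorem Finset.univ_val_map_eq_cons_erase {α β : Type*} [Fintype α] [DecidableEq α]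
    (f : α → β) (k : α) : univ.val.map f = f k ::ₘ (univ.erase k).val.map f := by
  rw [← Multiset.map_cons, Finset.erase_val, Multiset.cons_erase (mem_univ k)]

theorem Finset.univ_val_map_update {α β : Type*} [Fintype α] [DecidableEq α]
    (f : α → β) (k : α) (b : β) :
    univ.val.map (Function.update f k b) = b ::ₘ (univ.erase k).val.map f := by
  rw [univ_val_map_eq_cons_erase _ k, Function.update_self]
  exact congrArg _ <| Multiset.map_congr rfl fun l hl =>
    Function.update_of_ne (ne_of_mem_erase hl) b f

theorem Lagrange.eval_div_prod_sub_eq_sum {F ι : Type*} [Field F] [Fintype ι] [DecidableEq ι]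
    {v : ι → F} (hv : Function.Injective v) {x : F} (hx : ∀ i, x ≠ v i) {f : F[X]}
    (hf : f.degree < Fintype.card ι) :
    f.eval x / ∏ i, (x - v i)
      = ∑ i, f.eval (v i) / ((∏ l ∈ univ.erase i, (v i - v l)) * (x - v i)) := by
  have hnodal : (nodal univ v).eval x ≠ 0 := eval_nodal_not_at_node fun i _ => hx i
  nth_rw 1 [eq_interpolate hv.injOn hf]
  rw [eval_interpolate_not_at_node _ fun i _ => hx i, ← eval_nodal, mul_div_cancel_left₀ _ hnodal]
  refine sum_congr rfl fun i _ => ?_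
  rw [nodalWeight, prod_inv_distrib]
  field_simp

noncomputable def chiPoly (m : ℕ) (s : Multiset ℂ) : ℂ[X] :=
  ∑ j ∈ range (m + 1), C ((-1) ^ j * s.esymm j) * X ^ (m - j)

theorem eval_chiPoly (m : ℕ) (t : ℂ) (s : Multiset ℂ) : (chiPoly m s).eval t = chi m t s := by
  simp [chiPoly, chi, eval_finsetSum]

theorem degree_chiPoly_le (m : ℕ) (s : Multiset ℂ) : (chiPoly m s).degree ≤ m :=
  (degree_sum_le _ _).trans <| Finset.sup_le fun j _ =>
    (degree_C_mul_X_pow_le _ _).trans <| by exact_mod_cast Nat.sub_le m j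

theorem chi_succ_cons (m : ℕ) (t a : ℂ) (s : Multiset ℂ) :
    chi (m + 1) t (a ::ₘ s) = chi (m + 1) t s - a * chi m t s := by
  have hlin : ∑ j ∈ range (m + 1), (-1) ^ (j + 1) * (a * s.esymm j) * t ^ (m - j)
      = -(a * chi m t s) := by
    rw [chi, mul_sum, ← sum_neg_distrib]
    exact sum_congr rfl fun j _ => by ring
  simp only [chi, sum_range_succ' _ (m + 1), Multiset.esymm_cons_succ, Nat.add_sub_add_right,
    mul_add, add_mul, sum_add_distrib, Multiset.esymm_zero, hlin]
  ring

theorem chi_sum_difference_identity_general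
    (g : ℕ) (x0 : ℂ) (x : Fin g → ℂ)
    (hx : Function.Injective x) (hx0 : ∀ i, x0 ≠ x i)
    (y0 : ℂ) (y : Fin g → ℂ) (m : ℕ) (hm1 : 1 ≤ m) (hmg : m ≤ g - 1) :
    ∑ j, chi m (x j) (Multiset.map x univ.val) / (∏ l ∈ univ.erase j, (x j - x l))
        * ((y0 - y j) / (x0 - x j)) =
      y0 * chi m x0 (Multiset.map x univ.val) / (∏ i, (x0 - x i))
        + ∑ k, y k * chi m (x k) (Multiset.map (Function.update x k x0) univ.val)
            / ((x k - x0) * ∏ l ∈ univ.erase k, (x k - x l))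
        - ∑ k, y k * chi (m - 1) (x k) (Multiset.map x (univ.erase k).val)
            / (∏ l ∈ univ.erase k, (x k - x l)) := by
  obtain ⟨n, rfl⟩ : ∃ n, m = n + 1 := ⟨m - 1, by omega⟩
  have hdeg : (chiPoly (n + 1) (univ.val.map x)).degree < Fintype.card (Fin g) :=
    (degree_chiPoly_le _ _).trans_lt <| by
      rw [Fintype.card_fin]; exact_mod_cast (by omega : n + 1 < g)
  have hpf := Lagrange.eval_div_prod_sub_eq_sum hx hx0 hdeg
  simp only [eval_chiPoly] at hpf
  rw [mul_div_assoc, hpf, mul_sum, add_sub_assoc, ← sum_sub_distrib, ← sum_add_distrib]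
  refine sum_congr rfl fun k _ => ?_
  have hF : ∏ l ∈ univ.erase k, (x k - x l) ≠ 0 :=
    prod_ne_zero_iff.mpr fun l hl => sub_ne_zero.mpr (hx.ne (ne_of_mem_erase hl).symm)
  have hk0 : x0 - x k ≠ 0 := sub_ne_zero.mpr (hx0 k)
  have hk0' : x k - x0 ≠ 0 := sub_ne_zero.mpr (hx0 k).symm
  rw [univ_val_map_update, univ_val_map_eq_cons_erase x k, chi_succ_cons, chi_succ_cons,
    Nat.add_sub_cancel]
  field_simp
  ring

/-- For pairwise distinct `x, x_1, …, x_g`, arbitrary `y, y_1, …, y_g` and `1 ≤ m ≤ g−1`: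
`∑_j χ_m(x_j; x₁,…,x_g)/F'(x_j) · (y−y_j)/(x−x_j)
  = y χ_m(x; x₁,…,x_g)/F(x)
    + ∑_k y_k χ_m(x_k; x₁,…,x_{k−1},x,x_{k+1},…,x_g)/((x_k−x) F'(x_k))
    − ∑_k y_k χ_{m−1}(x_k; x₁,…,x̌_k,…,x_g)/F'(x_k)`. -/
theorem chi_sum_difference_identity
    (g : ℕ) (hg : 2 ≤ g) (x0 : ℂ) (x : Fin g → ℂ)
    (hx : Function.Injective x) (hx0 : ∀ i, x0 ≠ x i)
    (y0 : ℂ) (y : Fin g → ℂ) (m : ℕ) (hm1 : 1 ≤ m) (hmg : m ≤ g - 1) :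
    ∑ j, chi m (x j) (Multiset.map x univ.val) / (∏ l ∈ univ.erase j, (x j - x l))
        * ((y0 - y j) / (x0 - x j)) =
      y0 * chi m x0 (Multiset.map x univ.val) / (∏ i, (x0 - x i))
        + ∑ k, y k * chi m (x k) (Multiset.map (Function.update x k x0) univ.val)
            / ((x k - x0) * ∏ l ∈ univ.erase k, (x k - x l))
        - ∑ k, y k * chi (m - 1) (x k) (Multiset.map x (univ.erase k).val)
            / (∏ l ∈ univ.erase k, (x k - x l)) :=
  chi_sum_difference_identity_general g x0 x hx hx0 y0 y m hm1 hmg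
end

section
/- Let g ≥ 1 and λ_0, …, λ_{2g+1} ∈ ℂ; set f(x) = ∑_{k=0}^{2g+1} λ_k x^k and f_1(x, z) = ∑_{i=0}^g x^i z^i (2 λ_{2i} + λ_{2i+1}(x+z)). Let x_0, x_1, …, x_g be pairwise distinct complex numbers, let e_1 ≠ e_2 be complex numbers each different from every x_r, and let y_0, …, y_g be complex numbers with y_r^2 = f(x_r) for each r. Set R(x) = ∏_{r=0}^g (x − x_r), R'(x_r) = ∏_{s≠r} (x_r − x_s), and G'(x_r) = (x_r − e_1)(x_r − e_2) R'(x_r) (the derivative at x_r of G(x) = (x−e_1)(x−e_2)R(x)). Then: R(e_1) R(e_2) ∑_{0 ≤ r < s ≤ g} (2 y_r y_s − f_1(x_r, x_s)) / (4 G'(x_r) G'(x_s)) = (1/4) R(e_1) R(e_2) (∑_{r=0}^g y_r / ((e_1 − x_r)(e_2 − x_r) R'(x_r)))^2 − f(e_1) R(e_2) / (4 (e_1 − e_2)^2 R(e_1)) − f(e_2) R(e_1) / (4 (e_1 − e_2)^2 R(e_2)) + f_1(e_1, e_2) / (4 (e_1 − e_2)^2). -/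
open Finset Polynomial

lemma aux_basis_coeff {S : Finset ℂ} {t : ℂ} (ht : t ∈ S) :
    (Lagrange.basis S (id : ℂ → ℂ) t).coeff (S.card - 1) = (∏ u ∈ S.erase t, (t - u))⁻¹ := by
  have hinj : Set.InjOn (id : ℂ → ℂ) S := fun a _ b _ h => h
  have h1 : (Lagrange.basis S id t).natDegree = S.card - 1 := Lagrange.natDegree_basis hinj ht
  rw [← h1, Polynomial.coeff_natDegree, Lagrange.basis, Polynomial.leadingCoeff_prod,
    ← Finset.prod_inv_distrib]
  refine Finset.prod_congr rfl fun u hu => ?_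
  rw [Lagrange.basisDivisor, Polynomial.leadingCoeff_mul, Polynomial.leadingCoeff_C,
    (Polynomial.monic_X_sub_C _).leadingCoeff, mul_one, id_eq, id_eq]

lemma aux_sum_pow (S : Finset ℂ) (m : ℕ) (hm : m + 1 < S.card) :
    ∑ t ∈ S, t ^ m * (∏ u ∈ S.erase t, (t - u))⁻¹ = 0 := by
  have hinj : Set.InjOn (id : ℂ → ℂ) S := fun a _ b _ h => h
  have hdeg : ((Polynomial.X : ℂ[X]) ^ m).degree < S.card := by
    rw [Polynomial.degree_X_pow]
    exact_mod_cast (by omega : m < S.card)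
  have h := Lagrange.eq_interpolate (f := (Polynomial.X : ℂ[X]) ^ m) hinj hdeg
  have h2 := congrArg (fun p => Polynomial.coeff p (S.card - 1)) h
  simp only [Lagrange.interpolate_apply, Polynomial.finset_sum_coeff,
    Polynomial.coeff_C_mul, Polynomial.eval_pow, Polynomial.eval_X, id_eq,
    Polynomial.coeff_X_pow] at h2
  rw [if_neg (by omega : ¬ S.card - 1 = m)] at h2
  rw [← h2.symm]
  exact Finset.sum_congr rfl fun t ht => by rw [aux_basis_coeff ht]


lemma aux_sum_range_two_mul (n : ℕ) (h : ℕ → ℂ) :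
    ∑ k ∈ Finset.range (2 * n), h k = ∑ i ∈ Finset.range n, (h (2 * i) + h (2 * i + 1)) := by
  induction n with
  | zero => simp
  | succ n ih =>
    rw [show 2 * (n + 1) = (2 * n + 1) + 1 by ring, Finset.sum_range_succ, Finset.sum_range_succ,
      ih, Finset.sum_range_succ]
    ring

lemma aux_double_sum {n : ℕ} (F : Fin n → Fin n → ℂ)
    (hsym : ∀ r s, F r s = F s r) (hdiag : ∀ r, F r r = 0) :
    ∑ r, ∑ s, F r s = 2 * ∑ r, ∑ s ∈ univ.filter (fun s => r < s), F r s := by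
  have hswap : ∑ r, ∑ s ∈ univ.filter (fun s => s < r), F r s
      = ∑ r, ∑ s ∈ univ.filter (fun s => r < s), F r s := by
    rw [Finset.sum_comm' (s' := fun y => univ.filter (fun x => y < x)) (t' := univ)
      (by intro a b; simp)]
    exact Finset.sum_congr rfl fun r _ => Finset.sum_congr rfl fun s _ => hsym _ _
  have h2 : ∀ r : Fin n, ∑ s, F r s
      = (∑ s ∈ univ.filter (fun s => r < s), F r s)
        + ∑ s ∈ univ.filter (fun s => s < r), F r s := by
    intro r
    rw [← Finset.sum_filter_add_sum_filter_not univ (fun s => r < s) (F r)]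
    congr 1
    refine (Finset.sum_subset (fun s hs => ?_) (fun s hs hns => ?_)).symm
    · simp only [mem_filter, mem_univ, true_and] at hs ⊢
      exact not_lt_of_gt hs
    · simp only [mem_filter, mem_univ, true_and, not_lt] at hs hns
      have : s = r := le_antisymm hs hns
      rw [this, hdiag]
  rw [Finset.sum_congr rfl fun r _ => h2 r, Finset.sum_add_distrib, hswap]
  ring

set_option maxHeartbeats 1600000

/-- **Bolza's formula (I) ⇒ Bolza's formula (II): the algebraic identity.**
With `f(x) = ∑_{k=0}^{2g+1} λ_k x^k`,
`f₁(x,z) = ∑_{i=0}^g x^i z^i (2λ_{2i} + λ_{2i+1}(x+z))`, pairwise distinct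
`x_0, …, x_g`, points `e_1 ≠ e_2` distinct from all `x_r`, numbers `y_r` with
`y_r² = f(x_r)`, `R(t) = ∏ (t − x_r)`, `R'(x_r) = ∏_{s≠r}(x_r − x_s)` and
`G'(x_r) = (x_r−e_1)(x_r−e_2) R'(x_r)`:
`R(e₁)R(e₂) ∑_{r<s} (2 y_r y_s − f₁(x_r,x_s))/(4 G'(x_r) G'(x_s))
  = ¼ R(e₁)R(e₂) (∑_r y_r/((e₁−x_r)(e₂−x_r)R'(x_r)))²
    − f(e₁)R(e₂)/(4(e₁−e₂)²R(e₁)) − f(e₂)R(e₁)/(4(e₁−e₂)²R(e₂))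
    + f₁(e₁,e₂)/(4(e₁−e₂)²)`. -/
theorem bolza_I_to_II
    (g : ℕ) (hg : 1 ≤ g) (l : ℕ → ℂ)
    (f : ℂ → ℂ) (hf : ∀ t, f t = ∑ k ∈ Finset.range (2 * g + 2), l k * t ^ k)
    (f1 : ℂ → ℂ → ℂ)
    (hf1 : ∀ x z, f1 x z =
      ∑ i ∈ Finset.range (g + 1), x ^ i * z ^ i * (2 * l (2 * i) + l (2 * i + 1) * (x + z)))
    (x : Fin (g + 1) → ℂ) (hx : Function.Injective x)
    (e1 e2 : ℂ) (he : e1 ≠ e2) (he1 : ∀ r, e1 ≠ x r) (he2 : ∀ r, e2 ≠ x r)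
    (y : Fin (g + 1) → ℂ) (hy : ∀ r, (y r) ^ 2 = f (x r))
    (R : ℂ → ℂ) (hR : ∀ t, R t = ∏ r, (t - x r))
    (R' : Fin (g + 1) → ℂ) (hR' : ∀ r, R' r = ∏ s ∈ univ.erase r, (x r - x s))
    (G' : Fin (g + 1) → ℂ) (hG' : ∀ r, G' r = (x r - e1) * (x r - e2) * R' r) :
    R e1 * R e2 *
        ∑ r, ∑ s ∈ univ.filter (fun s => r < s),
          (2 * y r * y s - f1 (x r) (x s)) / (4 * G' r * G' s) =
      (1 / 4) * R e1 * R e2 *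
          (∑ r, y r / ((e1 - x r) * (e2 - x r) * R' r)) ^ 2
        - f e1 * R e2 / (4 * (e1 - e2) ^ 2 * R e1)
        - f e2 * R e1 / (4 * (e1 - e2) ^ 2 * R e2)
        + f1 e1 e2 / (4 * (e1 - e2) ^ 2) := by
  classical
  -- nonzero facts
  have hd : e1 - e2 ≠ 0 := sub_ne_zero_of_ne he
  have hRe1 : R e1 ≠ 0 := by
    rw [hR]; exact Finset.prod_ne_zero_iff.mpr fun r _ => sub_ne_zero_of_ne (he1 r)
  have hRe2 : R e2 ≠ 0 := by
    rw [hR]; exact Finset.prod_ne_zero_iff.mpr fun r _ => sub_ne_zero_of_ne (he2 r)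
  -- the key interpolation identity
  have hK : ∀ m : ℕ, m ≤ g + 1 → ∑ r, (x r) ^ m * (G' r)⁻¹
      = -(((e1 - e2) * R e1)⁻¹ * e1 ^ m + ((e2 - e1) * R e2)⁻¹ * e2 ^ m) := by
    intro m hm
    have hxinj : ∀ a ∈ (univ : Finset (Fin (g+1))), ∀ b ∈ (univ : Finset (Fin (g+1))),
        x a = x b → a = b := fun a _ b _ h => hx h
    have he2im : e2 ∉ Finset.image x Finset.univ := by
      simp only [Finset.mem_image, Finset.mem_univ, true_and, not_exists]
      exact fun r h => he2 r h.symm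
    have he1im : e1 ∉ Finset.image x Finset.univ := by
      simp only [Finset.mem_image, Finset.mem_univ, true_and, not_exists]
      exact fun r h => he1 r h.symm
    have he1T : e1 ∉ insert e2 (Finset.image x Finset.univ) := by
      simp only [Finset.mem_insert, not_or]
      exact ⟨he, he1im⟩
    have hcard : (insert e1 (insert e2 (Finset.image x Finset.univ))).card = g + 3 := by
      rw [Finset.card_insert_of_notMem he1T, Finset.card_insert_of_notMem he2im,
        Finset.card_image_of_injective _ hx, Finset.card_univ, Fintype.card_fin]
    have h0 := aux_sum_pow (insert e1 (insert e2 (Finset.image x Finset.univ))) m (by rw [hcard]; omega)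
    rw [Finset.sum_insert he1T, Finset.sum_insert he2im, Finset.sum_image hxinj] at h0
    have hprod1 : ∏ u ∈ (insert e1 (insert e2 (Finset.image x Finset.univ))).erase e1, (e1 - u)
        = (e1 - e2) * R e1 := by
      rw [Finset.erase_insert he1T, Finset.prod_insert he2im, Finset.prod_image hxinj, hR]
    have hprod2 : ∏ u ∈ (insert e1 (insert e2 (Finset.image x Finset.univ))).erase e2, (e2 - u)
        = (e2 - e1) * R e2 := by
      rw [Finset.erase_insert_of_ne he, Finset.erase_insert he2im, Finset.prod_insert he1im,
        Finset.prod_image hxinj, hR]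
    have hprod3 : ∀ r,
        ∏ u ∈ (insert e1 (insert e2 (Finset.image x Finset.univ))).erase (x r), (x r - u)
        = G' r := by
      intro r
      have him : (Finset.image x Finset.univ).erase (x r) = Finset.image x (Finset.univ.erase r) :=
        (Finset.image_erase hx _ _).symm
      have hi1 : e1 ∉ insert e2 (Finset.image x (Finset.univ.erase r)) := by
        simp only [Finset.mem_insert, Finset.mem_image, not_or, not_exists]
        exact ⟨he, fun s hh => he1 s hh.2.symm⟩
      have hi2 : e2 ∉ Finset.image x (Finset.univ.erase r) := by
        simp only [Finset.mem_image, not_exists]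
        exact fun s hh => he2 s hh.2.symm
      rw [Finset.erase_insert_of_ne (he1 r), Finset.erase_insert_of_ne (he2 r), him,
        Finset.prod_insert hi1, Finset.prod_insert hi2,
        Finset.prod_image (fun a _ b _ h => hx h), hG', hR']
      ring
    rw [hprod1, hprod2] at h0
    have h0' : e1 ^ m * ((e1 - e2) * R e1)⁻¹ + (e2 ^ m * ((e2 - e1) * R e2)⁻¹
        + ∑ r, (x r) ^ m * (G' r)⁻¹) = 0 := by
      rw [← h0]
      congr 2
      exact Finset.sum_congr rfl fun r _ => by rw [hprod3 r]
    linear_combination h0'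
  -- symmetry and diagonal of f1
  have hf1sym : ∀ a b : ℂ, f1 a b = f1 b a := by
    intro a b
    rw [hf1, hf1]
    exact Finset.sum_congr rfl fun i _ => by ring
  have hf1diag : ∀ a : ℂ, f1 a a = 2 * f a := by
    intro a
    rw [hf1, hf, show 2 * g + 2 = 2 * (g + 1) by ring, aux_sum_range_two_mul, Finset.mul_sum]
    exact Finset.sum_congr rfl fun i _ => by ring
  -- step 1 : rewrite the half sum as one eighth of a full double sum
  have hds : ∑ r, ∑ s, ((2 * y r * y s - f1 (x r) (x s)) * (G' r)⁻¹ * (G' s)⁻¹)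
      = 2 * ∑ r, ∑ s ∈ univ.filter (fun s => r < s),
          ((2 * y r * y s - f1 (x r) (x s)) * (G' r)⁻¹ * (G' s)⁻¹) := by
    refine aux_double_sum _ (fun r s => ?_) (fun r => ?_)
    · rw [hf1sym]; ring
    · rw [hf1diag, ← hy]; ring
  have hstep1 : (∑ r, ∑ s ∈ univ.filter (fun s => r < s),
        (2 * y r * y s - f1 (x r) (x s)) / (4 * G' r * G' s))
      = (1/8) * ∑ r, ∑ s, ((2 * y r * y s - f1 (x r) (x s)) * (G' r)⁻¹ * (G' s)⁻¹) := by
    have h14 : (∑ r, ∑ s ∈ univ.filter (fun s => r < s),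
          (2 * y r * y s - f1 (x r) (x s)) / (4 * G' r * G' s))
        = (1/4) * ∑ r, ∑ s ∈ univ.filter (fun s => r < s),
            ((2 * y r * y s - f1 (x r) (x s)) * (G' r)⁻¹ * (G' s)⁻¹) := by
      rw [Finset.mul_sum]
      refine Finset.sum_congr rfl fun r _ => ?_
      rw [Finset.mul_sum]
      refine Finset.sum_congr rfl fun s _ => ?_
      rw [div_eq_mul_inv, mul_inv, mul_inv]
      ring
    rw [h14]
    linear_combination (-1/8 : ℂ) * hds
  -- step 2 : split the full double sum
  have hstep2 : ∑ r, ∑ s, ((2 * y r * y s - f1 (x r) (x s)) * (G' r)⁻¹ * (G' s)⁻¹)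
      = 2 * (∑ r, y r * (G' r)⁻¹) ^ 2
        - ∑ r, ∑ s, (f1 (x r) (x s) * (G' r)⁻¹ * (G' s)⁻¹) := by
    have hsq : ∑ r, ∑ s, (2 * (y r * (G' r)⁻¹) * (y s * (G' s)⁻¹))
        = 2 * (∑ r, y r * (G' r)⁻¹) ^ 2 := by
      rw [sq, Finset.sum_mul_sum, Finset.mul_sum]
      refine Finset.sum_congr rfl fun r _ => ?_
      rw [Finset.mul_sum]
      exact Finset.sum_congr rfl fun s _ => by ring
    calc ∑ r, ∑ s, ((2 * y r * y s - f1 (x r) (x s)) * (G' r)⁻¹ * (G' s)⁻¹)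
        = ∑ r, ∑ s, ((2 * (y r * (G' r)⁻¹) * (y s * (G' s)⁻¹))
            - (f1 (x r) (x s) * (G' r)⁻¹ * (G' s)⁻¹)) :=
          Finset.sum_congr rfl fun r _ => Finset.sum_congr rfl fun s _ => by ring
      _ = 2 * (∑ r, y r * (G' r)⁻¹) ^ 2
            - ∑ r, ∑ s, (f1 (x r) (x s) * (G' r)⁻¹ * (G' s)⁻¹) := by
          simp only [Finset.sum_sub_distrib]
          rw [hsq]
  -- step 3 : expand the f1 double sum and evaluate via hK
  have hB : ∑ r, ∑ s, (f1 (x r) (x s) * (G' r)⁻¹ * (G' s)⁻¹)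
      = 2 * (((e1 - e2) * R e1)⁻¹) ^ 2 * f e1 + 2 * (((e2 - e1) * R e2)⁻¹) ^ 2 * f e2
        + 2 * ((e1 - e2) * R e1)⁻¹ * ((e2 - e1) * R e2)⁻¹ * f1 e1 e2 := by
    have h3a : ∑ r, ∑ s, (f1 (x r) (x s) * (G' r)⁻¹ * (G' s)⁻¹)
        = ∑ i ∈ Finset.range (g + 1), ∑ r, ∑ s,
            ((x r) ^ i * (x s) ^ i * (2 * l (2 * i) + l (2 * i + 1) * (x r + x s))
              * (G' r)⁻¹ * (G' s)⁻¹) := by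
      have h1 : ∀ r : Fin (g + 1), ∑ s, (f1 (x r) (x s) * (G' r)⁻¹ * (G' s)⁻¹)
          = ∑ i ∈ Finset.range (g + 1), ∑ s,
              ((x r) ^ i * (x s) ^ i * (2 * l (2 * i) + l (2 * i + 1) * (x r + x s))
                * (G' r)⁻¹ * (G' s)⁻¹) := by
        intro r
        rw [← Finset.sum_comm]
        refine Finset.sum_congr rfl fun s _ => ?_
        rw [hf1, Finset.sum_mul, Finset.sum_mul]
      rw [Finset.sum_congr rfl fun r _ => h1 r, Finset.sum_comm]
    have h3b : ∀ i : ℕ, ∑ r, ∑ s,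
          ((x r) ^ i * (x s) ^ i * (2 * l (2 * i) + l (2 * i + 1) * (x r + x s))
            * (G' r)⁻¹ * (G' s)⁻¹)
        = 2 * l (2 * i) * ((∑ r, (x r) ^ i * (G' r)⁻¹) * (∑ r, (x r) ^ i * (G' r)⁻¹))
          + l (2 * i + 1) * ((∑ r, (x r) ^ (i + 1) * (G' r)⁻¹) * (∑ r, (x r) ^ i * (G' r)⁻¹)
            + (∑ r, (x r) ^ i * (G' r)⁻¹) * (∑ r, (x r) ^ (i + 1) * (G' r)⁻¹)) := by
      intro i
      rw [Finset.sum_mul_sum, Finset.sum_mul_sum, Finset.sum_mul_sum]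
      simp only [Finset.mul_sum, ← Finset.sum_add_distrib]
      exact Finset.sum_congr rfl fun r _ => Finset.sum_congr rfl fun s _ => by ring
    rw [h3a, Finset.sum_congr rfl fun i _ => h3b i]
    have h3c : ∀ i ∈ Finset.range (g + 1),
        2 * l (2 * i) * ((∑ r, (x r) ^ i * (G' r)⁻¹) * (∑ r, (x r) ^ i * (G' r)⁻¹))
          + l (2 * i + 1) * ((∑ r, (x r) ^ (i + 1) * (G' r)⁻¹) * (∑ r, (x r) ^ i * (G' r)⁻¹)
            + (∑ r, (x r) ^ i * (G' r)⁻¹) * (∑ r, (x r) ^ (i + 1) * (G' r)⁻¹))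
        = 2 * l (2 * i)
              * ((-(((e1 - e2) * R e1)⁻¹ * e1 ^ i + ((e2 - e1) * R e2)⁻¹ * e2 ^ i))
                * (-(((e1 - e2) * R e1)⁻¹ * e1 ^ i + ((e2 - e1) * R e2)⁻¹ * e2 ^ i)))
          + l (2 * i + 1)
              * ((-(((e1 - e2) * R e1)⁻¹ * e1 ^ (i + 1) + ((e2 - e1) * R e2)⁻¹ * e2 ^ (i + 1)))
                  * (-(((e1 - e2) * R e1)⁻¹ * e1 ^ i + ((e2 - e1) * R e2)⁻¹ * e2 ^ i))
                + (-(((e1 - e2) * R e1)⁻¹ * e1 ^ i + ((e2 - e1) * R e2)⁻¹ * e2 ^ i))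
                  * (-(((e1 - e2) * R e1)⁻¹ * e1 ^ (i + 1)
                    + ((e2 - e1) * R e2)⁻¹ * e2 ^ (i + 1)))) := by
      intro i hi
      have hi' : i ≤ g + 1 := by
        have := Finset.mem_range.mp hi; omega
      have hi'' : i + 1 ≤ g + 1 := by
        have := Finset.mem_range.mp hi; omega
      rw [hK i hi', hK (i + 1) hi'']
    rw [Finset.sum_congr rfl h3c]
    have hfe1 : f e1 = ∑ i ∈ Finset.range (g + 1),
        (l (2 * i) * e1 ^ (2 * i) + l (2 * i + 1) * e1 ^ (2 * i + 1)) := by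
      rw [hf, show 2 * g + 2 = 2 * (g + 1) by ring, aux_sum_range_two_mul]
    have hfe2 : f e2 = ∑ i ∈ Finset.range (g + 1),
        (l (2 * i) * e2 ^ (2 * i) + l (2 * i + 1) * e2 ^ (2 * i + 1)) := by
      rw [hf, show 2 * g + 2 = 2 * (g + 1) by ring, aux_sum_range_two_mul]
    rw [hfe1, hfe2, hf1]
    simp only [Finset.mul_sum, ← Finset.sum_add_distrib]
    exact Finset.sum_congr rfl fun i _ => by ring
  -- rewrite the square sum on the right-hand side
  have hSrw : (∑ r, y r / ((e1 - x r) * (e2 - x r) * R' r)) = ∑ r, y r * (G' r)⁻¹ := by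
    refine Finset.sum_congr rfl fun r _ => ?_
    rw [show (e1 - x r) * (e2 - x r) * R' r = G' r from by rw [hG']; ring, div_eq_mul_inv]
  rw [hstep1, hstep2, hB, hSrw]
  rw [show e2 - e1 = -(e1 - e2) by ring]
  have k2 : R e1 * (R e1)⁻¹ = 1 := mul_inv_cancel₀ hRe1
  have k3 : R e2 * (R e2)⁻¹ = 1 := mul_inv_cancel₀ hRe2
  simp only [mul_inv, inv_neg, div_eq_mul_inv, ← inv_pow]
  set d := e1 - e2 with hdd
  linear_combination (norm := ring_nf)
    (d⁻¹ ^ 2 / 4) * (f1 e1 e2 - f e1 * R e2 * (R e1)⁻¹) * k2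
      + (d⁻¹ ^ 2 / 4) * (f1 e1 e2 * R e1 * (R e1)⁻¹ - f e2 * R e1 * (R e2)⁻¹) * k3
end

section
/- Let g ≥ 1, let λ_0, …, λ_{2g+1} be complex numbers with f(x) = ∑_{k=0}^{2g+1} λ_k x^k, let x_1, …, x_g be pairwise distinct complex numbers, and let e_1 ≠ e_3 be complex numbers each different from every x_r. Set F(t) = ∏_{r=1}^g (t − x_r). For each r let ψ_r(t) = f(t) / ((e_1 − t)(e_3 − t) (∏_{s≠r}(t − x_s))^2). Then ∑_{r=1}^g ψ_r'(x_r) = −(f(e_1)/F(e_1)^2 − f(e_3)/F(e_3)^2)/(e_1 − e_3) + λ_{2g+1}, where ψ_r' denotes the derivative of the one-variable rational function ψ_r. -/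
/-!
The rational function `f / ((t - e₁)(t - e₃) F²)` has simple poles at `e₁, e₃` and double poles at
the `x_r`, where its residue is `ψ_r'(x_r)`. Its numerator has degree `≤ 2g + 1` and its denominator
is monic of degree `2g + 2`, so its residues sum to `λ_{2g+1}`.

Algebraically: at a pole `a` of order `m` with cofactor `Q_a`, the Taylor polynomial `L_a` of order
`m - 1` of `f / Q_a` satisfies `f ≡ L_a Q_a` modulo `(X - a)^m`. Coprimality and a degree count give
`f = ∑ L_a Q_a`, and the coefficient of `X^{2g+1}` in `L_a Q_a` is the residue at `a`.
-/

open Finset Polynomial Lagrange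

namespace Polynomial

theorem X_sub_C_sq_dvd_of_isRoot_of_isRoot_derivative {R : Type*} [CommRing R] {p : R[X]}
    {a : R} (h : p.IsRoot a) (h' : (derivative p).IsRoot a) : (X - C a) ^ 2 ∣ p := by
  rcases eq_or_ne p 0 with rfl | hp
  · exact dvd_zero _
  · exact (le_rootMultiplicity_iff hp).1 ((one_lt_rootMultiplicity_iff_isRoot hp).2 ⟨h, h'⟩)

variable {K : Type*} [Field K]

theorem X_sub_C_dvd_sub_C_mul {p q : K[X]} {a : K} (hq : q.eval a ≠ 0) :
    X - C a ∣ p - C (p.eval a / q.eval a) * q := by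
  rw [dvd_iff_isRoot, IsRoot, eval_sub, eval_mul, eval_C, div_mul_cancel₀ _ hq, sub_self]

/-- `L i / (X - a i) ^ m i` is the principal part of `p / ∏ j, (X - a j) ^ m j` at `a i`, so the
top coefficient of `L i` is the residue there. -/
theorem coeff_eq_sum_residues {ι : Type*} [Fintype ι] {a : ι → K}
    (ha : Function.Injective a) (m : ι → ℕ) {p : K[X]} (L Q : ι → K[X])
    (hQ : ∀ i, Q i * (X - C (a i)) ^ m i = ∏ j, (X - C (a j)) ^ m j)
    (hL : ∀ i, (L i).natDegree < m i) (hloc : ∀ i, (X - C (a i)) ^ m i ∣ p - L i * Q i)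
    (hp : p.natDegree < ∑ i, m i) :
    p.coeff (∑ i, m i - 1) = ∑ i, (L i).coeff (m i - 1) := by
  classical
  set W : ι → K[X] := fun i => (X - C (a i)) ^ m i
  have hWmonic : ∀ i, (W i).Monic := fun i => (monic_X_sub_C _).pow _
  have hDmonic : (∏ i, W i).Monic := monic_prod_of_monic _ _ fun i _ => hWmonic i
  have hDdeg : (∏ i, W i).natDegree = ∑ i, m i := by
    rw [natDegree_prod_of_monic _ _ fun i _ => hWmonic i]
    simp [W]
  have hcop : Pairwise (Function.onFun IsCoprime W) := fun i j hij =>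
    (pairwise_coprime_X_sub_C ha hij).pow
  have hQmonic : ∀ i, (Q i).Monic := fun i => (hWmonic i).of_mul_monic_right (hQ i ▸ hDmonic)
  have hQdeg : ∀ i, (Q i).natDegree + m i = ∑ i, m i := fun i => by
    rw [← hDdeg, ← hQ i, (hQmonic i).natDegree_mul (hWmonic i), natDegree_pow, natDegree_X_sub_C,
      mul_one]
  have hWQ : ∀ i j, i ≠ j → W i ∣ Q j := fun i j hij =>
    (hcop hij).dvd_of_dvd_mul_right ((hQ j).symm ▸ dvd_prod_of_mem W (mem_univ i))
  have hsum : p - ∑ i, L i * Q i = 0 := by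
    refine eq_zero_of_dvd_of_natDegree_lt (Fintype.prod_dvd_of_coprime hcop fun i => ?_) ?_
    · rw [← add_sum_erase _ _ (mem_univ i), ← sub_sub]
      exact dvd_sub (hloc i) (dvd_sum fun j hj =>
        dvd_mul_of_dvd_right (hWQ i j (ne_of_mem_erase hj).symm) _)
    · rw [hDdeg]
      refine (natDegree_sub_le _ _).trans_lt (max_lt hp ?_)
      refine (natDegree_sum_le_of_forall_le _ _ (n := ∑ i, m i - 1) fun i _ => ?_).trans_lt ?_
      · have := hL i
        have := hQdeg i
        exact natDegree_mul_le.trans (by omega)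
      · omega
  calc p.coeff (∑ i, m i - 1) = ∑ i, (L i * Q i).coeff (∑ i, m i - 1) := by
        rw [← finsetSum_coeff, ← sub_eq_zero, ← coeff_sub, hsum, coeff_zero]
    _ = ∑ i, (L i).coeff (m i - 1) := sum_congr rfl fun i _ => by
        have := hL i
        have := hQdeg i
        rw [show ∑ i, m i - 1 = m i - 1 + (Q i).natDegree by omega,
          coeff_mul_add_eq_of_natDegree_le (by omega) le_rfl, (hQmonic i).coeff_natDegree, mul_one]

theorem X_sub_C_sq_dvd_sub_taylor_mul {𝕜 : Type*} [NontriviallyNormedField 𝕜] {p q : 𝕜[X]}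
    {a : 𝕜} (hq : q.eval a ≠ 0) :
    (X - C a) ^ 2 ∣ p - (C (p.eval a / q.eval a) +
      C (deriv (fun t => p.eval t / q.eval t) a) * (X - C a)) * q := by
  have hderiv : deriv (fun t => p.eval t / q.eval t) a * q.eval a ^ 2 =
      (derivative p).eval a * q.eval a - p.eval a * (derivative q).eval a := by
    rw [deriv_fun_div p.differentiableAt q.differentiableAt hq, Polynomial.deriv,
      Polynomial.deriv, div_mul_cancel₀ _ (pow_ne_zero 2 hq)]
  apply X_sub_C_sq_dvd_of_isRoot_of_isRoot_derivative
  · simp [div_mul_cancel₀ _ hq]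
  · simp only [IsRoot, derivative_sub, derivative_mul, derivative_add, derivative_C, derivative_X,
      eval_sub, eval_add, eval_mul, eval_C, eval_X, eval_zero, eval_one]
    field_simp
    linear_combination -hderiv

end Polynomial

theorem sum_deriv_add_residues_eq_coeff {𝕜 : Type*} [NontriviallyNormedField 𝕜] {ι : Type*}
    [Fintype ι] [DecidableEq ι] {x : ι → 𝕜} (hx : Function.Injective x) {e₁ e₃ : 𝕜}
    (he : e₁ ≠ e₃) (he₁ : ∀ r, e₁ ≠ x r) (he₃ : ∀ r, e₃ ≠ x r) {p : 𝕜[X]}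
    (hp : p.natDegree ≤ 2 * Fintype.card ι + 1) :
    ∑ r, deriv (fun t => p.eval t / ((t - e₁) * (t - e₃) * (nodal (univ.erase r) x).eval t ^ 2))
        (x r) +
      p.eval e₁ / ((e₁ - e₃) * (nodal univ x).eval e₁ ^ 2) +
      p.eval e₃ / ((e₃ - e₁) * (nodal univ x).eval e₃ ^ 2) =
      p.coeff (2 * Fintype.card ι + 1) := by
  let a : ι ⊕ Bool → 𝕜 := Sum.elim x fun b => bif b then e₁ else e₃
  let m : ι ⊕ Bool → ℕ := Sum.elim (fun _ => 2) fun _ => 1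
  let Q : ι ⊕ Bool → 𝕜[X] :=
    Sum.elim (fun r => (X - C e₁) * (X - C e₃) * nodal (univ.erase r) x ^ 2)
      fun b => (X - C (bif b then e₃ else e₁)) * nodal univ x ^ 2
  let L : ι ⊕ Bool → 𝕜[X] := Sum.elim
    (fun r => C (p.eval (x r) / (Q (.inl r)).eval (x r)) +
      C (deriv (fun t => p.eval t / (Q (.inl r)).eval t) (x r)) * (X - C (x r)))
    fun b => C (p.eval (a (.inr b)) / (Q (.inr b)).eval (a (.inr b)))
  have ha : Function.Injective a := by
    refine hx.sumElim (fun b b' h => ?_) fun r b => ?_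
    · cases b <;> cases b' <;> simp_all [eq_comm]
    · cases b <;> simp [Ne.symm (he₁ r), Ne.symm (he₃ r)]
  have hD : ∏ j, (X - C (a j)) ^ m j = (X - C e₁) * (X - C e₃) * nodal univ x ^ 2 := by
    rw [Fintype.prod_sum_type, Fintype.prod_bool]
    simp only [a, m, Sum.elim_inl, Sum.elim_inr, prod_pow, cond_true, cond_false, pow_one, nodal_eq]
    ring
  have hQ : ∀ i, Q i * (X - C (a i)) ^ m i = ∏ j, (X - C (a j)) ^ m j := by
    rintro (r | _ | _)
    · rw [hD, nodal_eq_mul_nodal_erase (mem_univ r)]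
      simp only [Q, a, m, Sum.elim_inl]
      ring
    all_goals simp only [hD, Q, a, m, Sum.elim_inr, cond_true, cond_false]; ring
  have hQa : ∀ i, (Q i).eval (a i) ≠ 0 := by
    have hx' : ∀ r, ∀ s ∈ univ.erase r, x r ≠ x s := fun r s hs => hx.ne (ne_of_mem_erase hs).symm
    rintro (r | _ | _) <;> simp [Q, a, sub_eq_zero, eval_nodal_not_at_node, eval_nodal_not_at_node
      (hx' _), he, he.symm, he₁, he₃, (he₁ _).symm, (he₃ _).symm]
  have hL : ∀ i, (L i).natDegree < m i := by
    rintro (r | _ | _) <;> simp only [L, m, Sum.elim_inl, Sum.elim_inr, Nat.lt_succ_iff] <;>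
      compute_degree!
  have hloc : ∀ i, (X - C (a i)) ^ m i ∣ p - L i * Q i := by
    rintro (r | b)
    · exact X_sub_C_sq_dvd_sub_taylor_mul (hQa (.inl r))
    · simpa [m, L] using X_sub_C_dvd_sub_C_mul (p := p) (hQa (.inr b))
  have hdeg : ∑ i, m i = 2 * Fintype.card ι + 2 := by
    simp [m, Fintype.sum_sum_type, mul_comm]
  have key := coeff_eq_sum_residues ha m L Q hQ hL hloc (by omega)
  rw [hdeg, show 2 * Fintype.card ι + 2 - 1 = 2 * Fintype.card ι + 1 by omega] at key
  simp [key, L, m, a, Q, Fintype.sum_sum_type, add_assoc]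

theorem sum_deriv_two_poles_general
    (g : ℕ) (l : ℕ → ℂ)
    (f : ℂ → ℂ) (hf : ∀ t, f t = ∑ k ∈ Finset.range (2 * g + 2), l k * t ^ k)
    (x : Fin g → ℂ) (hx : Function.Injective x)
    (e1 e3 : ℂ) (he : e1 ≠ e3) (he1 : ∀ r, e1 ≠ x r) (he3 : ∀ r, e3 ≠ x r)
    (F : ℂ → ℂ) (hF : ∀ t, F t = ∏ r, (t - x r))
    (ψ : Fin g → ℂ → ℂ)
    (hψ : ∀ r t, ψ r t =
      f t / ((e1 - t) * (e3 - t) * (∏ s ∈ univ.erase r, (t - x s)) ^ 2)) :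
    ∑ r, deriv (ψ r) (x r) =
      -((f e1 / (F e1) ^ 2 - f e3 / (F e3) ^ 2) / (e1 - e3)) + l (2 * g + 1) := by
  let p : ℂ[X] := ∑ k ∈ range (2 * g + 2), C (l k) * X ^ k
  have hfp : ∀ t, f t = p.eval t := fun t => by simp [hf, p, eval_finsetSum]
  have hp : p.natDegree ≤ 2 * Fintype.card (Fin g) + 1 :=
    natDegree_sum_le_of_forall_le _ _ fun k hk =>
      (natDegree_C_mul_X_pow_le _ _).trans (by simpa [Nat.lt_succ_iff] using hk)
  have hcoeff : p.coeff (2 * g + 1) = l (2 * g + 1) := by simp [p, finsetSum_coeff]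
  have hψp : ∀ r, ψ r = fun t =>
      p.eval t / ((t - e1) * (t - e3) * (nodal (univ.erase r) x).eval t ^ 2) := fun r => by
    funext t
    rw [hψ, hfp, eval_nodal]
    ring
  have key := sum_deriv_add_residues_eq_coeff hx he he1 he3 hp
  rw [Fintype.card_fin, hcoeff] at key
  calc ∑ r, deriv (ψ r) (x r)
      = l (2 * g + 1) - p.eval e1 / ((e1 - e3) * (nodal univ x).eval e1 ^ 2)
          - p.eval e3 / ((e3 - e1) * (nodal univ x).eval e3 ^ 2) := by
        simp only [hψp]
        rw [← key]
        ring
    _ = _ := by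
        simp only [hfp, hF, ← eval_nodal, ← neg_sub e1 e3, div_mul_eq_div_div_swap, div_neg]
        ring

/-- With `f(x) = ∑_{k=0}^{2g+1} λ_k x^k`, pairwise distinct `x_1, …, x_g`,
`e_1 ≠ e_3` distinct from all `x_r`, `F(t) = ∏ (t − x_r)`, and
`ψ_r(t) = f(t)/((e_1−t)(e_3−t)(∏_{s≠r}(t−x_s))²)`:
`∑_r ψ_r'(x_r) = −(f(e_1)/F(e_1)² − f(e_3)/F(e_3)²)/(e_1−e_3) + λ_{2g+1}`. -/
theorem sum_deriv_two_poles
    (g : ℕ) (hg : 1 ≤ g) (l : ℕ → ℂ)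
    (f : ℂ → ℂ) (hf : ∀ t, f t = ∑ k ∈ Finset.range (2 * g + 2), l k * t ^ k)
    (x : Fin g → ℂ) (hx : Function.Injective x)
    (e1 e3 : ℂ) (he : e1 ≠ e3) (he1 : ∀ r, e1 ≠ x r) (he3 : ∀ r, e3 ≠ x r)
    (F : ℂ → ℂ) (hF : ∀ t, F t = ∏ r, (t - x r))
    (ψ : Fin g → ℂ → ℂ)
    (hψ : ∀ r t, ψ r t =
      f t / ((e1 - t) * (e3 - t) * (∏ s ∈ univ.erase r, (t - x s)) ^ 2)) :
    ∑ r, deriv (ψ r) (x r) =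
      -((f e1 / (F e1) ^ 2 - f e3 / (F e3) ^ 2) / (e1 - e3)) + l (2 * g + 1) :=
  sum_deriv_two_poles_general g l f hf x hx e1 e3 he he1 he3 F hF ψ hψ
end

section
/- Let g ≥ 1, let λ_0, …, λ_{2g+1} be complex numbers with f(x) = ∑_{k=0}^{2g+1} λ_k x^k, let x_1, …, x_g be pairwise distinct complex numbers, and let e_1, e_2, e_3 be pairwise distinct complex numbers each different from every x_r. Set F(t) = ∏_{r=1}^g (t − x_r) and φ_i = f(e_i)/F(e_i)^2 for i = 1, 2, 3. For each r let ψ_r(t) = f(t) / ((e_1 − t)(e_2 − t)(e_3 − t) (∏_{s≠r}(t − x_s))^2). Then ∑_{r=1}^g ψ_r'(x_r) = φ_1/((e_1 − e_2)(e_1 − e_3)) + φ_2/((e_2 − e_1)(e_2 − e_3)) + φ_3/((e_3 − e_1)(e_3 − e_2)), where ψ_r' denotes the derivative of the one-variable rational function ψ_r. -/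
open Finset

lemma aux_sq_dvd {p : Polynomial ℂ} {a : ℂ} (h0 : p.eval a = 0)
    (h1 : p.derivative.eval a = 0) : (Polynomial.X - Polynomial.C a) ^ 2 ∣ p := by
  obtain ⟨q, rfl⟩ := Polynomial.dvd_iff_isRoot.mpr h0
  have hq : q.eval a = 0 := by
    simpa [Polynomial.derivative_mul] using h1
  obtain ⟨q2, rfl⟩ := Polynomial.dvd_iff_isRoot.mpr hq
  exact ⟨q2, by ring⟩

lemma aux_deriv_eval_zero {p q : Polynomial ℂ} {a : ℂ} (h : q ^ 2 ∣ p) (hq : q.eval a = 0) :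
    (Polynomial.derivative p).eval a = 0 := by
  obtain ⟨k, rfl⟩ := h
  simp [Polynomial.derivative_mul, Polynomial.derivative_pow, hq]

open Polynomial in
/-- With `f(x) = ∑_{k=0}^{2g+1} λ_k x^k`, pairwise distinct `x_1, …, x_g`,
pairwise distinct `e_1, e_2, e_3` distinct from all `x_r`,
`F(t) = ∏ (t − x_r)`, `φ_i = f(e_i)/F(e_i)²`, and
`ψ_r(t) = f(t)/((e_1−t)(e_2−t)(e_3−t)(∏_{s≠r}(t−x_s))²)`:
`∑_r ψ_r'(x_r) = φ₁/((e₁−e₂)(e₁−e₃)) + φ₂/((e₂−e₁)(e₂−e₃)) + φ₃/((e₃−e₁)(e₃−e₂))`. -/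
theorem sum_deriv_three_poles
    (g : ℕ) (hg : 1 ≤ g) (l : ℕ → ℂ)
    (f : ℂ → ℂ) (hf : ∀ t, f t = ∑ k ∈ Finset.range (2 * g + 2), l k * t ^ k)
    (x : Fin g → ℂ) (hx : Function.Injective x)
    (e1 e2 e3 : ℂ) (h12 : e1 ≠ e2) (h13 : e1 ≠ e3) (h23 : e2 ≠ e3)
    (he1 : ∀ r, e1 ≠ x r) (he2 : ∀ r, e2 ≠ x r) (he3 : ∀ r, e3 ≠ x r)
    (F : ℂ → ℂ) (hF : ∀ t, F t = ∏ r, (t - x r))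
    (φ1 φ2 φ3 : ℂ)
    (hφ1 : φ1 = f e1 / (F e1) ^ 2) (hφ2 : φ2 = f e2 / (F e2) ^ 2)
    (hφ3 : φ3 = f e3 / (F e3) ^ 2)
    (ψ : Fin g → ℂ → ℂ)
    (hψ : ∀ r t, ψ r t =
      f t / ((e1 - t) * (e2 - t) * (e3 - t) * (∏ s ∈ univ.erase r, (t - x s)) ^ 2)) :
    ∑ r, deriv (ψ r) (x r) =
      φ1 / ((e1 - e2) * (e1 - e3)) + φ2 / ((e2 - e1) * (e2 - e3))
        + φ3 / ((e3 - e1) * (e3 - e2)) := by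
  classical
  set N : ℂ[X] := ∑ k ∈ Finset.range (2 * g + 2), C (l k) * X ^ k with hN
  have hNeval : ∀ t, N.eval t = f t := by
    intro t; rw [hf, hN]; simp [eval_finset_sum]
  set G : Fin g → ℂ[X] := fun r => ∏ s ∈ univ.erase r, (X - C (x s)) with hG
  set Fp : ℂ[X] := ∏ r, (X - C (x r)) with hFp
  have hFeval : ∀ t, Fp.eval t = F t := by intro t; rw [hF, hFp]; simp [eval_prod]
  have hGeval : ∀ r t, (G r).eval t = ∏ s ∈ univ.erase r, (t - x s) := by
    intro r t; rw [hG]; simp [eval_prod]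
  set U : Fin g → ℂ[X] := fun r => (C e1 - X) * (C e2 - X) * (C e3 - X) * (G r) ^ 2 with hU
  have hUeval : ∀ r t, (U r).eval t = (e1 - t) * (e2 - t) * (e3 - t) * ((G r).eval t) ^ 2 := by
    intro r t; rw [hU]; simp
  have hψfun : ∀ r, ψ r = fun t => N.eval t / (U r).eval t := by
    intro r; funext t; rw [hψ, hNeval, hUeval, hGeval]
  -- nonvanishing facts
  have hGx : ∀ r, (G r).eval (x r) ≠ 0 := by
    intro r; rw [hGeval]
    exact Finset.prod_ne_zero_iff.mpr fun s hs =>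
      sub_ne_zero.mpr fun h => (Finset.ne_of_mem_erase hs) (hx h).symm
  have hUx : ∀ r, (U r).eval (x r) ≠ 0 := by
    intro r; rw [hUeval]
    exact mul_ne_zero (mul_ne_zero (mul_ne_zero (sub_ne_zero.mpr (he1 r))
      (sub_ne_zero.mpr (he2 r))) (sub_ne_zero.mpr (he3 r))) (pow_ne_zero _ (hGx r))
  have hFpx : ∀ r, Fp.eval (x r) = 0 := by
    intro r; rw [hFp]; simp [eval_prod]
    exact Finset.prod_eq_zero (Finset.mem_univ r) (sub_self _)
  have hGx' : ∀ r r', r' ≠ r → (G r').eval (x r) = 0 := by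
    intro r r' hne; rw [hGeval]
    exact Finset.prod_eq_zero (Finset.mem_erase.mpr ⟨Ne.symm hne, Finset.mem_univ r⟩) (sub_self _)
  have hFe : ∀ t, (∀ r, t ≠ x r) → Fp.eval t ≠ 0 := by
    intro t ht; rw [hFp]; simp only [eval_prod, eval_sub, eval_X, eval_C]
    exact Finset.prod_ne_zero_iff.mpr fun r _ => sub_ne_zero.mpr (ht r)
  have h12' : e1 - e2 ≠ 0 := sub_ne_zero.mpr h12
  have h13' : e1 - e3 ≠ 0 := sub_ne_zero.mpr h13
  have h23' : e2 - e3 ≠ 0 := sub_ne_zero.mpr h23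
  have h21' : e2 - e1 ≠ 0 := sub_ne_zero.mpr (Ne.symm h12)
  have h31' : e3 - e1 ≠ 0 := sub_ne_zero.mpr (Ne.symm h13)
  have h32' : e3 - e2 ≠ 0 := sub_ne_zero.mpr (Ne.symm h23)
  -- derivative values
  set d : Fin g → ℂ := fun r =>
    (N.derivative.eval (x r) * (U r).eval (x r)
      - N.eval (x r) * (U r).derivative.eval (x r)) / ((U r).eval (x r)) ^ 2 with hd
  have hderiv : ∀ r, deriv (ψ r) (x r) = d r := by
    intro r; rw [hψfun r, hd]
    exact ((N.hasDerivAt (x r)).div ((U r).hasDerivAt (x r)) (hUx r)).deriv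
  set c : Fin g → ℂ := fun r => N.eval (x r) / (U r).eval (x r) with hc
  set A1 : ℂ := φ1 / ((e1 - e2) * (e1 - e3)) with hA1
  set A2 : ℂ := φ2 / ((e2 - e1) * (e2 - e3)) with hA2
  set A3 : ℂ := φ3 / ((e3 - e1) * (e3 - e2)) with hA3
  set R1 : ℂ[X] := (X - C e2) * (X - C e3) * Fp ^ 2 with hR1
  set R2 : ℂ[X] := (X - C e1) * (X - C e3) * Fp ^ 2 with hR2
  set R3 : ℂ[X] := (X - C e1) * (X - C e2) * Fp ^ 2 with hR3
  set W : Fin g → ℂ[X] := fun r => U r * (X - C (x r)) with hW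
  set Q : ℂ[X] := N - (C A1 * R1 + C A2 * R2 + C A3 * R3)
      - ∑ r, (C (c r) * U r + C (d r) * W r) with hQdef
  -- roots at e i
  have hUe : ∀ r (t : ℂ), (e1 - t) * (e2 - t) * (e3 - t) = 0 → (U r).eval t = 0 := by
    intro r t h; rw [hUeval, h, zero_mul]
  have hsum_e : ∀ t : ℂ, (e1 - t) * (e2 - t) * (e3 - t) = 0 →
      (∑ r, (C (c r) * U r + C (d r) * W r)).eval t = 0 := by
    intro t h; rw [eval_finset_sum]
    refine Finset.sum_eq_zero fun r _ => ?_
    rw [hW]; simp [hUe r t h]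
  have hQe1 : Q.eval e1 = 0 := by
    have h0 : (e1 - e1) * (e2 - e1) * (e3 - e1) = 0 := by ring
    rw [hQdef]
    simp only [eval_sub, eval_add, eval_mul, eval_C, hsum_e e1 h0, hR1, hR2, hR3,
      eval_pow, eval_X, sub_self, zero_mul, mul_zero, sub_zero]
    rw [hNeval, hA1, hφ1, hFeval]
    have hFne : F e1 ≠ 0 := by rw [← hFeval]; exact hFe e1 he1
    field_simp
    ring
  have hQe2 : Q.eval e2 = 0 := by
    have h0 : (e1 - e2) * (e2 - e2) * (e3 - e2) = 0 := by ring
    rw [hQdef]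
    simp only [eval_sub, eval_add, eval_mul, eval_C, hsum_e e2 h0, hR1, hR2, hR3,
      eval_pow, eval_X, sub_self, zero_mul, mul_zero, sub_zero]
    rw [hNeval, hA2, hφ2, hFeval]
    have hFne : F e2 ≠ 0 := by rw [← hFeval]; exact hFe e2 he2
    field_simp
    ring
  have hQe3 : Q.eval e3 = 0 := by
    have h0 : (e1 - e3) * (e2 - e3) * (e3 - e3) = 0 := by ring
    rw [hQdef]
    simp only [eval_sub, eval_add, eval_mul, eval_C, hsum_e e3 h0, hR1, hR2, hR3,
      eval_pow, eval_X, sub_self, zero_mul, mul_zero, sub_zero]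
    rw [hNeval, hA3, hφ3, hFeval]
    have hFne : F e3 ≠ 0 := by rw [← hFeval]; exact hFe e3 he3
    field_simp
    ring
  -- Q vanishes at x r
  have hQxr : ∀ r, Q.eval (x r) = 0 := by
    intro r
    have hsum : (∑ r', (C (c r') * U r' + C (d r') * W r')).eval (x r) = N.eval (x r) := by
      rw [eval_finset_sum, Finset.sum_eq_single r]
      · rw [hW]
        simp only [eval_add, eval_mul, eval_C, eval_sub, eval_X, sub_self, mul_zero, add_zero]
        rw [hc]
        exact div_mul_cancel₀ _ (hUx r)
      · intro r' _ hne
        rw [hW]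
        simp [hUeval, hGx' r r' hne]
      · simp
    rw [hQdef]
    simp only [eval_sub, eval_add, eval_mul, eval_C, hsum, hR1, hR2, hR3, eval_pow,
      hFpx r]
    ring
  -- derivative of Q vanishes at x r
  have hQ'xr : ∀ r, Q.derivative.eval (x r) = 0 := by
    intro r
    rw [hQdef, derivative_sub, derivative_sub, derivative_add, derivative_add]
    simp only [eval_sub, eval_add]
    have hA1' : (derivative (C A1 * R1)).eval (x r) = 0 :=
      aux_deriv_eval_zero ⟨C A1 * ((X - C e2) * (X - C e3)), by rw [hR1]; ring⟩ (hFpx r)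
    have hA2' : (derivative (C A2 * R2)).eval (x r) = 0 :=
      aux_deriv_eval_zero ⟨C A2 * ((X - C e1) * (X - C e3)), by rw [hR2]; ring⟩ (hFpx r)
    have hA3' : (derivative (C A3 * R3)).eval (x r) = 0 :=
      aux_deriv_eval_zero ⟨C A3 * ((X - C e1) * (X - C e2)), by rw [hR3]; ring⟩ (hFpx r)
    have hsum : (derivative (∑ r', (C (c r') * U r' + C (d r') * W r'))).eval (x r)
        = N.derivative.eval (x r) := by
      rw [derivative_sum, eval_finset_sum, Finset.sum_eq_single r]
      · have hc' : (derivative (C (c r) * U r)).eval (x r)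
            = c r * (U r).derivative.eval (x r) := by
          rw [derivative_mul]; simp
        have hdW : (derivative (C (d r) * W r)).eval (x r) = d r * (U r).eval (x r) := by
          rw [hW, derivative_mul, derivative_mul]
          simp [sub_self]
        rw [derivative_add, eval_add, hc', hdW]
        have key : ∀ nn nn' uu uu' : ℂ, uu ≠ 0 →
            nn / uu * uu' + (nn' * uu - nn * uu') / uu ^ 2 * uu = nn' := by
          intro nn nn' uu uu' h; field_simp; ring
        simp only [hc, hd]
        exact key _ _ _ _ (hUx r)
      · intro r' _ hne
        have hdvd : (G r') ^ 2 ∣ (C (c r') * U r' + C (d r') * W r') := by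
          refine ⟨C (c r') * ((C e1 - X) * (C e2 - X) * (C e3 - X))
            + C (d r') * ((C e1 - X) * (C e2 - X) * (C e3 - X) * (X - C (x r'))), ?_⟩
          rw [hW, hU]; ring
        exact aux_deriv_eval_zero hdvd (hGx' r r' hne)
      · simp
    rw [hA1', hA2', hA3', hsum]
    ring
  -- divisibility by the full modulus
  have hcop : ∀ a b : ℂ, a ≠ b → IsCoprime (X - C a : ℂ[X]) (X - C b) := by
    intro a b hab
    exact isCoprime_X_sub_C_of_isUnit_sub (isUnit_iff_ne_zero.mpr (sub_ne_zero.mpr hab))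
  set y : Fin g ⊕ Fin 3 → ℂ := Sum.elim x ![e1, e2, e3] with hy
  set m : Fin g ⊕ Fin 3 → ℕ := Sum.elim (fun _ => 2) (fun _ => 1) with hm
  have hyne : ∀ a b : Fin g ⊕ Fin 3, a ≠ b → y a ≠ y b := by
    have hxe : ∀ (r : Fin g) (i : Fin 3), x r ≠ ![e1, e2, e3] i := by
      intro r i
      fin_cases i
      · exact fun h => he1 r h.symm
      · exact fun h => he2 r h.symm
      · exact fun h => he3 r h.symm
    rintro (r | i) (r' | i') hab <;>
      simp only [hy, Sum.elim_inl, Sum.elim_inr]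
    · exact fun h => hab (congrArg Sum.inl (hx h))
    · exact hxe r i'
    · exact fun h => hxe r' i h.symm
    · have hii : i ≠ i' := fun h => hab (by rw [h])
      fin_cases i <;> fin_cases i' <;> first
        | exact absurd rfl hii
        | exact h12 | exact h13 | exact h23
        | exact Ne.symm h12 | exact Ne.symm h13 | exact Ne.symm h23
  have hdvds : ∀ j, (X - C (y j)) ^ (m j) ∣ Q := by
    rintro (r | i)
    · exact aux_sq_dvd (hQxr r) (hQ'xr r)
    · simp only [hy, hm, Sum.elim_inr, pow_one]
      fin_cases i
      · exact dvd_iff_isRoot.mpr hQe1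
      · exact dvd_iff_isRoot.mpr hQe2
      · exact dvd_iff_isRoot.mpr hQe3
  set M : ℂ[X] := (X - C e1) * (X - C e2) * (X - C e3) * Fp ^ 2 with hM
  have hMdvd : M ∣ Q := by
    have hprod : (∏ j, (X - C (y j)) ^ (m j)) ∣ Q := by
      apply Finset.prod_dvd_of_coprime
      · intro a _ b _ hab
        exact ((hcop _ _ (hyne a b hab)).pow :
          IsCoprime ((X - C (y a)) ^ m a) ((X - C (y b)) ^ m b))
      · intro j _
        exact hdvds j
    have heq : (∏ j, (X - C (y j)) ^ (m j)) = M := by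
      rw [Fintype.prod_sum_type]
      simp only [hy, hm, Sum.elim_inl, Sum.elim_inr, pow_one]
      rw [Finset.prod_pow, hM]
      rw [Fin.prod_univ_three]
      simp only [Matrix.cons_val_zero, Matrix.cons_val_one, Matrix.head_cons,
        Matrix.cons_val_two, Matrix.tail_cons]
      rw [hFp]
      ring
    rwa [heq] at hprod
  -- monicity and degrees
  have hFpMonic : Fp.Monic := by
    rw [hFp]; exact monic_prod_of_monic _ _ fun r _ => monic_X_sub_C _
  have hFpdeg : Fp.natDegree = g := by
    rw [hFp, natDegree_prod _ _ fun i _ => X_sub_C_ne_zero (x i)]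
    simp [natDegree_X_sub_C]
  have hGMonic : ∀ r, (G r).Monic := by
    intro r; rw [hG]; exact monic_prod_of_monic _ _ fun s _ => monic_X_sub_C _
  have hGdeg : ∀ r, (G r).natDegree = g - 1 := by
    intro r
    rw [hG]
    rw [natDegree_prod _ _ fun i _ => X_sub_C_ne_zero (x i)]
    simp [natDegree_X_sub_C, Finset.card_erase_of_mem]
  have hMdeg : M.natDegree = 2 * g + 3 := by
    rw [hM,
      Polynomial.Monic.natDegree_mul
        (((monic_X_sub_C e1).mul (monic_X_sub_C e2)).mul (monic_X_sub_C e3)) (hFpMonic.pow 2),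
      Polynomial.Monic.natDegree_mul ((monic_X_sub_C e1).mul (monic_X_sub_C e2))
        (monic_X_sub_C e3),
      Polynomial.Monic.natDegree_mul (monic_X_sub_C e1) (monic_X_sub_C e2),
      natDegree_pow, hFpdeg]
    simp only [natDegree_X_sub_C]
    ring
  -- degree bounds
  have hXC1 : ∀ a : ℂ, (C a - X : ℂ[X]).natDegree ≤ 1 := by
    intro a
    refine le_trans (natDegree_sub_le _ _) ?_
    simp
  have hNdeg : N.natDegree ≤ 2 * g + 1 := by
    rw [hN]
    apply Polynomial.natDegree_sum_le_of_forall_le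
    intro k hk
    refine le_trans (natDegree_C_mul_le _ _) ?_
    rw [natDegree_X_pow]
    have := Finset.mem_range.mp hk
    omega
  have hUdeg : ∀ r, (U r).natDegree ≤ 2 * g + 1 := by
    intro r
    rw [hU]
    refine le_trans (natDegree_mul_le) ?_
    have h1 : ((C e1 - X) * (C e2 - X) * (C e3 - X) : ℂ[X]).natDegree ≤ 3 := by
      refine le_trans (natDegree_mul_le) ?_
      have := le_trans (natDegree_mul_le
        (p := (C e1 - X : ℂ[X])) (q := (C e2 - X))) (add_le_add (hXC1 e1) (hXC1 e2))
      have := hXC1 e3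
      omega
    have h2 : ((G r) ^ 2).natDegree ≤ 2 * g - 2 := by
      rw [natDegree_pow, hGdeg r]; omega
    omega
  have hWdeg : ∀ r, (W r).natDegree ≤ 2 * g + 2 := by
    intro r
    rw [hW]
    refine le_trans (natDegree_mul_le) ?_
    have : (X - C (x r) : ℂ[X]).natDegree ≤ 1 := le_of_eq (natDegree_X_sub_C _)
    have := hUdeg r
    omega
  have hRdeg : ∀ a b : ℂ, ((X - C a) * (X - C b) * Fp ^ 2).natDegree = 2 * g + 2 := by
    intro a b
    rw [Polynomial.Monic.natDegree_mul ((monic_X_sub_C a).mul (monic_X_sub_C b))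
        (hFpMonic.pow 2),
      Polynomial.Monic.natDegree_mul (monic_X_sub_C a) (monic_X_sub_C b),
      natDegree_pow, hFpdeg]
    simp only [natDegree_X_sub_C]
    ring
  have hQdeg : Q.natDegree ≤ 2 * g + 2 := by
    rw [hQdef]
    refine le_trans (natDegree_sub_le _ _) (max_le (le_trans (natDegree_sub_le _ _)
      (max_le ?_ ?_)) ?_)
    · omega
    · refine le_trans (natDegree_add_le _ _) (max_le (le_trans (natDegree_add_le _ _)
        (max_le ?_ ?_)) ?_) <;>
      · refine le_trans (natDegree_C_mul_le _ _) ?_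
        first
          | (rw [hR1]; exact le_of_eq (hRdeg _ _))
          | (rw [hR2]; exact le_of_eq (hRdeg _ _))
          | (rw [hR3]; exact le_of_eq (hRdeg _ _))
    · apply Polynomial.natDegree_sum_le_of_forall_le
      intro r _
      refine le_trans (natDegree_add_le _ _) (max_le ?_ ?_)
      · refine le_trans (natDegree_C_mul_le _ _) ?_
        have := hUdeg r; omega
      · exact le_trans (natDegree_C_mul_le _ _) (hWdeg r)
  -- Q must be zero
  have hQ0 : Q = 0 := by
    by_contra h
    have h1 := Polynomial.natDegree_le_of_dvd hMdvd h
    rw [hMdeg] at h1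
    omega
  -- extract the coefficient of X^(2g+2)
  have hco := congrArg (fun p : ℂ[X] => p.coeff (2 * g + 2)) hQ0
  simp only [coeff_zero] at hco
  rw [hQdef, coeff_sub, coeff_sub, coeff_add, coeff_add, finset_sum_coeff,
    finset_sum_coeff] at hco
  have hNc : ∑ b ∈ Finset.range (2 * g + 2), (C (l b) * X ^ b).coeff (2 * g + 2) = 0 := by
    refine Finset.sum_eq_zero fun k hk => ?_
    rw [coeff_C_mul, coeff_X_pow, if_neg (by have := Finset.mem_range.mp hk; omega), mul_zero]
  have hRc : ∀ a b : ℂ, ((X - C a) * (X - C b) * Fp ^ 2).coeff (2 * g + 2) = 1 := by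
    intro a b
    have hm : ((X - C a) * (X - C b) * Fp ^ 2).Monic :=
      ((monic_X_sub_C a).mul (monic_X_sub_C b)).mul (hFpMonic.pow 2)
    have := hm.coeff_natDegree
    rwa [hRdeg a b] at this
  have hUc : ∀ r, (U r).coeff (2 * g + 2) = 0 := fun r =>
    coeff_eq_zero_of_natDegree_lt (by have := hUdeg r; omega)
  have hWc : ∀ r, (W r).coeff (2 * g + 2) = -1 := by
    intro r
    have hWM : W r = -((X - C e1) * (X - C e2) * (X - C e3) * (G r) ^ 2 * (X - C (x r))) := by
      rw [hW, hU]; ring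
    have hm : ((X - C e1) * (X - C e2) * (X - C e3) * (G r) ^ 2 * (X - C (x r))).Monic :=
      ((((monic_X_sub_C e1).mul (monic_X_sub_C e2)).mul (monic_X_sub_C e3)).mul
        ((hGMonic r).pow 2)).mul (monic_X_sub_C (x r))
    have hmd : ((X - C e1) * (X - C e2) * (X - C e3) * (G r) ^ 2
        * (X - C (x r))).natDegree = 2 * g + 2 := by
      rw [Polynomial.Monic.natDegree_mul
          ((((monic_X_sub_C e1).mul (monic_X_sub_C e2)).mul (monic_X_sub_C e3)).mul
            ((hGMonic r).pow 2)) (monic_X_sub_C (x r)),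
        Polynomial.Monic.natDegree_mul
          (((monic_X_sub_C e1).mul (monic_X_sub_C e2)).mul (monic_X_sub_C e3))
          ((hGMonic r).pow 2),
        Polynomial.Monic.natDegree_mul ((monic_X_sub_C e1).mul (monic_X_sub_C e2))
          (monic_X_sub_C e3),
        Polynomial.Monic.natDegree_mul (monic_X_sub_C e1) (monic_X_sub_C e2),
        natDegree_pow, hGdeg r]
      simp only [natDegree_X_sub_C]
      omega
    have := hm.coeff_natDegree
    rw [hmd] at this
    rw [hWM, coeff_neg, this]
  have hsumc : ∑ r, (C (c r) * U r + C (d r) * W r).coeff (2 * g + 2) = -∑ r, d r := by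
    rw [← Finset.sum_neg_distrib]
    refine Finset.sum_congr rfl fun r _ => ?_
    rw [coeff_add, coeff_C_mul, coeff_C_mul, hUc r, hWc r]
    ring
  rw [hNc, hsumc, coeff_C_mul, coeff_C_mul, coeff_C_mul, hR1, hR2, hR3,
    hRc, hRc, hRc] at hco
  -- conclude
  have hfinal : ∑ r, d r = A1 + A2 + A3 := by linear_combination hco
  calc ∑ r, deriv (ψ r) (x r) = ∑ r, d r := Finset.sum_congr rfl fun r _ => hderiv r
    _ = A1 + A2 + A3 := hfinal
end

section
/- Let e_1, e_2, e_3, e_4 be pairwise distinct complex numbers and Δ_1, Δ_2, Δ_3, Δ_4 arbitrary complex numbers; set Δ_{ij} = −(Δ_i − Δ_j)/(e_i − e_j) for i ≠ j and M = (e_2 − e_3)(e_3 − e_1)(e_1 − e_2)(e_4 − e_1)(e_4 − e_2)(e_4 − e_3). Then (e_2 − e_3)^3 (e_4 − e_1)^3 Δ_{23}^2 Δ_{41}^2 + (e_3 − e_1)^3 (e_4 − e_2)^3 Δ_{31}^2 Δ_{42}^2 + (e_1 − e_2)^3 (e_4 − e_3)^3 Δ_{12}^2 Δ_{43}^2 =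 M · [ 2 (Δ_{14} + Δ_{24} + Δ_{34}) Δ_{12} Δ_{23} Δ_{31} − Δ_{23} Δ_{31} ((e_1 − e_4) Δ_{14}^2 − (e_2 − e_4) Δ_{24}^2)/(e_1 − e_2) − Δ_{12} Δ_{31} ((e_2 − e_4) Δ_{24}^2 − (e_3 − e_4) Δ_{34}^2)/(e_2 − e_3) − Δ_{12} Δ_{23} ((e_3 − e_4) Δ_{34}^2 − (e_1 − e_4) Δ_{14}^2)/(e_3 − e_1) ]. -/
/-- For pairwise distinct `e₁, e₂, e₃, e₄` and arbitrary `Δ₁, Δ₂, Δ₃, Δ₄`, with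
`Δ_{ij} = −(Δ_i − Δ_j)/(e_i − e_j)` and
`M = (e₂−e₃)(e₃−e₁)(e₁−e₂)(e₄−e₁)(e₄−e₂)(e₄−e₃)`:
`(e₂−e₃)³(e₄−e₁)³Δ₂₃²Δ₄₁² + (e₃−e₁)³(e₄−e₂)³Δ₃₁²Δ₄₂² + (e₁−e₂)³(e₄−e₃)³Δ₁₂²Δ₄₃²
  = M·[2(Δ₁₄+Δ₂₄+Δ₃₄)Δ₁₂Δ₂₃Δ₃₁
      − Δ₂₃Δ₃₁((e₁−e₄)Δ₁₄²−(e₂−e₄)Δ₂₄²)/(e₁−e₂)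
      − Δ₁₂Δ₃₁((e₂−e₄)Δ₂₄²−(e₃−e₄)Δ₃₄²)/(e₂−e₃)
      − Δ₁₂Δ₂₃((e₃−e₄)Δ₃₄²−(e₁−e₄)Δ₁₄²)/(e₃−e₁)]`. -/
theorem delta_four_point_identity
    (e1 e2 e3 e4 D1 D2 D3 D4 : ℂ)
    (h12 : e1 ≠ e2) (h13 : e1 ≠ e3) (h14 : e1 ≠ e4)
    (h23 : e2 ≠ e3) (h24 : e2 ≠ e4) (h34 : e3 ≠ e4)
    (D12 D23 D31 D14 D24 D34 D41 D42 D43 M : ℂ)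
    (hD12 : D12 = -((D1 - D2) / (e1 - e2)))
    (hD23 : D23 = -((D2 - D3) / (e2 - e3)))
    (hD31 : D31 = -((D3 - D1) / (e3 - e1)))
    (hD14 : D14 = -((D1 - D4) / (e1 - e4)))
    (hD24 : D24 = -((D2 - D4) / (e2 - e4)))
    (hD34 : D34 = -((D3 - D4) / (e3 - e4)))
    (hD41 : D41 = -((D4 - D1) / (e4 - e1)))
    (hD42 : D42 = -((D4 - D2) / (e4 - e2)))
    (hD43 : D43 = -((D4 - D3) / (e4 - e3)))
    (hM : M = (e2 - e3) * (e3 - e1) * (e1 - e2) * (e4 - e1) * (e4 - e2) * (e4 - e3)) :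
    (e2 - e3) ^ 3 * (e4 - e1) ^ 3 * D23 ^ 2 * D41 ^ 2
      + (e3 - e1) ^ 3 * (e4 - e2) ^ 3 * D31 ^ 2 * D42 ^ 2
      + (e1 - e2) ^ 3 * (e4 - e3) ^ 3 * D12 ^ 2 * D43 ^ 2 =
    M * (2 * (D14 + D24 + D34) * D12 * D23 * D31
      - D23 * D31 * ((e1 - e4) * D14 ^ 2 - (e2 - e4) * D24 ^ 2) / (e1 - e2)
      - D12 * D31 * ((e2 - e4) * D24 ^ 2 - (e3 - e4) * D34 ^ 2) / (e2 - e3)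
      - D12 * D23 * ((e3 - e4) * D34 ^ 2 - (e1 - e4) * D14 ^ 2) / (e3 - e1)) := by
  subst hD12 hD23 hD31 hD14 hD24 hD34 hD41 hD42 hD43 hM
  field_simp
  ring
end
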